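/- arXiv:0712.1707 — 6 statements merged into one kernel-verified Lean document; each statement's English description precedes it below -/
import Mathlib

section
/- For every vertex X (with index set also denoted X), there are exactly 2^k arrangement domains whose closure contains the point X, and the map sending such a domain Δ to the sign vector (sign of f_j on Δ)_{j∈X} is a bijection from this set of domains onto {−1,+1}^X. -/
open Set MeasureTheory Filter
open scoped Classical Real

noncomputable section

namespace HypArr

variable {k N : ℕ}

/-- The hyperplane `H j = f j ⁻¹ (0)` of the `j`-th affine form. -/
def Hyp (f : Fin N → ((Fin k → ℝ) →ᵃ[ℝ] ℝ)) (j : Fin N) : Set (Fin k → ℝ) :=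
  {x | f j x = 0}

/-- The complement `ℝ^k ∖ (H 1 ∪ ⋯ ∪ H N)` of the union of all the hyperplanes. -/
def HypCompl (f : Fin N → ((Fin k → ℝ) →ᵃ[ℝ] ℝ)) : Set (Fin k → ℝ) :=
  {x | ∀ j, f j x ≠ 0}

/-- `Δ` is an arrangement domain: a connected component of `ℝ^k ∖ (H 1 ∪ ⋯ ∪ H N)`. -/
def IsDomain (f : Fin N → ((Fin k → ℝ) →ᵃ[ℝ] ℝ)) (Δ : Set (Fin k → ℝ)) : Prop :=
  ∃ x ∈ HypCompl f, Δ = connectedComponentIn (HypCompl f) x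

/-- The hyperplanes `H 1, …, H N` are in generic position in `ℝ^k`: they are pairwise
distinct, any `k` of them intersect in exactly one point, and any `k+1` of them have
empty intersection. -/
def Generic (f : Fin N → ((Fin k → ℝ) →ᵃ[ℝ] ℝ)) : Prop :=
  (∀ i j : Fin N, i ≠ j → Hyp f i ≠ Hyp f j) ∧
  (∀ S : Finset (Fin N), S.card = k → ∃! x : Fin k → ℝ, ∀ j ∈ S, f j x = 0) ∧
  (∀ S : Finset (Fin N), S.card = k + 1 → ¬ ∃ x : Fin k → ℝ, ∀ j ∈ S, f j x = 0)

/-- `X` is a vertex of the arrangement. -/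
def IsVertex (f : Fin N → ((Fin k → ℝ) →ᵃ[ℝ] ℝ)) (X : Fin k → ℝ) : Prop :=
  ∃ S : Finset (Fin N), S.card = k ∧ ∀ j ∈ S, f j X = 0

/-- `X` is the vertex of the arrangement with index set `S`. -/
def IsVertexOf (f : Fin N → ((Fin k → ℝ) →ᵃ[ℝ] ℝ)) (S : Finset (Fin N))
    (X : Fin k → ℝ) : Prop :=
  S.card = k ∧ ∀ j ∈ S, f j X = 0

/-- The linear form `f0` is in general position with respect to the arrangement:
it takes pairwise distinct values at the vertices and is nonconstant on each
line `L_U = ∩_{j ∈ U} H j` for `U` of cardinality `k - 1`. -/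
def GenericLin (f : Fin N → ((Fin k → ℝ) →ᵃ[ℝ] ℝ)) (f0 : (Fin k → ℝ) →ₗ[ℝ] ℝ) : Prop :=
  (∀ X Y : Fin k → ℝ, IsVertex f X → IsVertex f Y → X ≠ Y → f0 X ≠ f0 Y) ∧
  ∀ U : Finset (Fin N), U.card = k - 1 →
    ∃ x y : Fin k → ℝ, (∀ j ∈ U, f j x = 0) ∧ (∀ j ∈ U, f j y = 0) ∧ f0 x ≠ f0 y

/-- `C` is a connected component of `ℝ^k ∖ ⋃_{j ∈ S} H j`. -/
def IsConeComp (f : Fin N → ((Fin k → ℝ) →ᵃ[ℝ] ℝ)) (S : Finset (Fin N))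
    (C : Set (Fin k → ℝ)) : Prop :=
  ∃ y, (∀ j ∈ S, f j y ≠ 0) ∧ C = connectedComponentIn {z | ∀ j ∈ S, f j z ≠ 0} y

/-- `C` is the cone `C⁺_X` of the vertex `X` with index set `S`: the unique connected
component of `ℝ^k ∖ ⋃_{j ∈ S} H j` on which `f0 - f0 X` is everywhere positive. -/
def IsPosCone (f : Fin N → ((Fin k → ℝ) →ᵃ[ℝ] ℝ)) (f0 : (Fin k → ℝ) →ₗ[ℝ] ℝ)
    (S : Finset (Fin N)) (X : Fin k → ℝ) (C : Set (Fin k → ℝ)) : Prop :=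
  IsConeComp f S C ∧ ∀ y ∈ C, f0 X < f0 y

/-- `C` is the cone `C⁻_X` of the vertex `X` with index set `S`: the unique connected
component of `ℝ^k ∖ ⋃_{j ∈ S} H j` on which `f0 - f0 X` is everywhere negative. -/
def IsNegCone (f : Fin N → ((Fin k → ℝ) →ᵃ[ℝ] ℝ)) (f0 : (Fin k → ℝ) →ₗ[ℝ] ℝ)
    (S : Finset (Fin N)) (X : Fin k → ℝ) (C : Set (Fin k → ℝ)) : Prop :=
  IsConeComp f S C ∧ ∀ y ∈ C, f0 y < f0 X

/-- `Δ` is the domain `Δ_X` of the vertex `X`: the unique arrangement domain whose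
closure contains `X` and on which `f0 - f0 X > 0`. -/
def IsDomOf (f : Fin N → ((Fin k → ℝ) →ᵃ[ℝ] ℝ)) (f0 : (Fin k → ℝ) →ₗ[ℝ] ℝ)
    (X : Fin k → ℝ) (Δ : Set (Fin k → ℝ)) : Prop :=
  IsDomain f Δ ∧ X ∈ closure Δ ∧ ∀ y ∈ Δ, f0 X < f0 y

/-- `Δ` is the domain `Δ⁻_X` of the vertex `X`: the unique arrangement domain whose
closure contains `X` and on which `f0 - f0 X < 0`. -/
def IsNegDomOf (f : Fin N → ((Fin k → ℝ) →ᵃ[ℝ] ℝ)) (f0 : (Fin k → ℝ) →ₗ[ℝ] ℝ)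
    (X : Fin k → ℝ) (Δ : Set (Fin k → ℝ)) : Prop :=
  IsDomain f Δ ∧ X ∈ closure Δ ∧ ∀ y ∈ Δ, f0 y < f0 X

/-- `Δ` belongs to `𝒟⁺`: it is an arrangement domain on which `f0` is bounded
from below. -/
def MemDplus (f : Fin N → ((Fin k → ℝ) →ᵃ[ℝ] ℝ)) (f0 : (Fin k → ℝ) →ₗ[ℝ] ℝ)
    (Δ : Set (Fin k → ℝ)) : Prop :=
  IsDomain f Δ ∧ BddBelow (f0 '' Δ)

/-- `Δ` belongs to `𝒟⁻`: it is an arrangement domain on which `f0` is bounded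
from above. -/
def MemDminus (f : Fin N → ((Fin k → ℝ) →ᵃ[ℝ] ℝ)) (f0 : (Fin k → ℝ) →ₗ[ℝ] ℝ)
    (Δ : Set (Fin k → ℝ)) : Prop :=
  IsDomain f Δ ∧ BddAbove (f0 '' Δ)

/-- The set `W` (a hyperplane) separates `S` from `T`: they lie in different connected
components of the complement of `W`. -/
def Separates {α : Type*} [TopologicalSpace α] (W S T : Set α) : Prop :=
  ∃ x ∈ S, ∃ y ∈ T, S ⊆ connectedComponentIn Wᶜ x ∧ T ⊆ connectedComponentIn Wᶜ y ∧
    connectedComponentIn Wᶜ x ≠ connectedComponentIn Wᶜ y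

/-- The index set of `ℋ(Δ, Δ')`, the set of hyperplanes separating `Δ` from `Δ'`. -/
def SepSet (f : Fin N → ((Fin k → ℝ) →ᵃ[ℝ] ℝ)) (Δ Δ' : Set (Fin k → ℝ)) :
    Finset (Fin N) :=
  Finset.univ.filter fun j => Separates (Hyp f j) Δ Δ'


/-- Sign constancy: a continuous nonvanishing function on a preconnected set
has constant sign. -/
lemma sign_const {k : ℕ} {g : (Fin k → ℝ) → ℝ} (hg : Continuous g)
    {s : Set (Fin k → ℝ)} (hs : IsPreconnected s) (hne : ∀ y ∈ s, g y ≠ 0)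
    {x y : Fin k → ℝ} (hx : x ∈ s) (hy : y ∈ s) (hpos : 0 < g x) : 0 < g y := by
  by_contra h
  push_neg at h
  have hylt : g y < 0 := lt_of_le_of_ne h (hne y hy)
  have h0 : (0:ℝ) ∈ Icc (g y) (g x) := ⟨hylt.le, hpos.le⟩
  obtain ⟨z, hz, hz0⟩ := hs.intermediate_value hy hx hg.continuousOn h0
  exact hne z hz hz0

/-- On an arrangement domain, each `c * f j` has constant sign. -/
lemma domain_sign {k N : ℕ} (f : Fin N → ((Fin k → ℝ) →ᵃ[ℝ] ℝ)) {Δ : Set (Fin k → ℝ)}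
    (hΔ : IsDomain f Δ) (j : Fin N) (c : ℝ) {y y' : Fin k → ℝ}
    (hy : y ∈ Δ) (hy' : y' ∈ Δ) (h : 0 < c * f j y) : 0 < c * f j y' := by
  obtain ⟨x, hx, rfl⟩ := hΔ
  have hc : c ≠ 0 := by rintro rfl; simp at h
  exact sign_const (continuous_const.mul (f j).continuous_of_finiteDimensional)
    isPreconnected_connectedComponentIn
    (fun z hz => mul_ne_zero hc
      ((connectedComponentIn_subset _ _ hz : _ ∈ HypCompl f) j)) hy hy' h

lemma combo_pos {a b p q : ℝ} (ha : 0 ≤ a) (hb : 0 ≤ b) (hab : a + b = 1)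
    (hp : 0 < p) (hq : 0 < q) : 0 < a * p + b * q := by
  rcases lt_or_eq_of_le ha with ha' | ha'
  · exact add_pos_of_pos_of_nonneg (mul_pos ha' hp) (mul_nonneg hb hq.le)
  · have hb1 : b = 1 := by linarith
    rw [← ha', hb1]; simpa using hq

/-- Key lemma: for each choice of signs on the index set of a vertex, there is a
unique arrangement domain adherent to the vertex realizing these signs. -/
lemma key {k N : ℕ} (f : Fin N → ((Fin k → ℝ) →ᵃ[ℝ] ℝ)) (hf : Generic f)
    {Sx : Finset (Fin N)} {X : Fin k → ℝ} (hX : IsVertexOf f Sx X)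
    (ε : Fin N → ℝ) (hε : ∀ j ∈ Sx, ε j = 1 ∨ ε j = -1) :
    ∃! Δ : Set (Fin k → ℝ), IsDomain f Δ ∧ X ∈ closure Δ ∧
      ∀ j ∈ Sx, ∀ y ∈ Δ, 0 < ε j * f j y := by
  obtain ⟨hScard, hSzero⟩ := hX
  have hnz : ∀ j ∉ Sx, f j X ≠ 0 := by
    intro j hj h0
    refine hf.2.2 (insert j Sx) ?_ ⟨X, ?_⟩
    · rw [Finset.card_insert_of_notMem hj, hScard]
    · intro i hi
      rcases Finset.mem_insert.mp hi with rfl | hi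
      · exact h0
      · exact hSzero i hi
  have hUopen : IsOpen {y : Fin k → ℝ | ∀ j ∉ Sx, f j y ≠ 0} := by
    have hU : {y : Fin k → ℝ | ∀ j ∉ Sx, f j y ≠ 0} =
        ⋂ j : Fin N, {y | j ∉ Sx → f j y ≠ 0} := by
      ext y; simp [Set.mem_iInter]
    rw [hU]
    refine isOpen_iInter_of_finite fun j => ?_
    by_cases hj : j ∈ Sx
    · simp [hj]
    · have hU2 : {y : Fin k → ℝ | j ∉ Sx → f j y ≠ 0} = (f j) ⁻¹' ({0}ᶜ) := by
        ext y; simp [hj]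
      rw [hU2]
      exact isOpen_compl_singleton.preimage (f j).continuous_of_finiteDimensional
  obtain ⟨r, hr0, hball⟩ := Metric.isOpen_iff.mp hUopen X hnz
  -- solving the linear system on Sx
  have hsurj : ∀ c : Fin N → ℝ, ∃ w : Fin k → ℝ, ∀ j ∈ Sx, (f j).linear w = c j := by
    intro c
    set L : (Fin k → ℝ) →ₗ[ℝ] ({j // j ∈ Sx} → ℝ) :=
      LinearMap.pi (fun j => (f j.1).linear) with hLdef
    have hinj : Function.Injective L := by
      rw [← LinearMap.ker_eq_bot, LinearMap.ker_eq_bot']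
      intro v hv
      obtain ⟨x₀, hx₀, hu⟩ := hf.2.1 Sx hScard
      have h1 : v + X = x₀ := by
        apply hu
        intro j hj
        have hvj : (f j).linear v = 0 := congrFun hv ⟨j, hj⟩
        have hm := (f j).map_vadd X v
        simp only [vadd_eq_add] at hm
        rw [hm, hvj, hSzero j hj, add_zero]
      have h2 : X = x₀ := hu X hSzero
      exact add_right_cancel (a := v) (b := X) (c := 0)
        (by rw [zero_add]; exact h1.trans h2.symm)
    have hdim : Module.finrank ℝ (Fin k → ℝ) = Module.finrank ℝ ({j // j ∈ Sx} → ℝ) := by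
      simp [Module.finrank_fintype_fun_eq_card, Fintype.card_coe, hScard]
    have hsj : Function.Surjective L :=
      (LinearMap.injective_iff_surjective_of_finrank_eq_finrank hdim).mp hinj
    obtain ⟨w, hw⟩ := hsj (fun j => c j.1)
    exact ⟨w, fun j hj => congrFun hw ⟨j, hj⟩⟩
  set Q : Set (Fin k → ℝ) := {y | dist y X < r ∧ ∀ j ∈ Sx, 0 < ε j * f j y} with hQdef
  have hQsub : Q ⊆ HypCompl f := by
    intro y hy j
    by_cases hj : j ∈ Sx
    · intro h0
      have := hy.2 j hj
      rw [h0, mul_zero] at this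
      exact lt_irrefl _ this
    · exact hball (Metric.mem_ball.mpr hy.1) j hj
  have hQconv : Convex ℝ Q := by
    intro y hy y' hy' a b ha hb hab
    constructor
    · have hm : a • y + b • y' ∈ Metric.ball X r :=
        convex_ball X r (Metric.mem_ball.mpr hy.1) (Metric.mem_ball.mpr hy'.1) ha hb hab
      exact Metric.mem_ball.mp hm
    · intro j hj
      have hcombo : f j (a • y + b • y') = a • f j y + b • f j y' :=
        Convex.combo_affine_apply hab
      have heq : ε j * f j (a • y + b • y') =
          a * (ε j * f j y) + b * (ε j * f j y') := by
        rw [hcombo]; simp only [smul_eq_mul]; ring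
      rw [heq]
      exact combo_pos ha hb hab (hy.2 j hj) (hy'.2 j hj)
  obtain ⟨w, hw⟩ := hsurj ε
  have hXQ : X ∈ closure Q := by
    rw [Metric.mem_closure_iff]
    intro δ hδ
    set t : ℝ := min r δ / (2 * (‖w‖ + 1)) with htdef
    have hwpos : (0:ℝ) < ‖w‖ + 1 := by positivity
    have ht0 : 0 < t := div_pos (lt_min hr0 hδ) (by positivity)
    have hdist : dist (t • w + X) X = t * ‖w‖ := by
      simp [dist_eq_norm, norm_smul, abs_of_pos ht0]
    have hlt : t * ‖w‖ < min r δ := by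
      have h1 : t * ‖w‖ ≤ t * (‖w‖ + 1) := by nlinarith [ht0.le]
      have h2 : t * (‖w‖ + 1) = min r δ / 2 := by
        rw [htdef]; field_simp
      have h3 : min r δ / 2 < min r δ := by
        have := lt_min hr0 hδ; linarith
      linarith
    refine ⟨t • w + X, ⟨?_, ?_⟩, ?_⟩
    · rw [hdist]; exact lt_of_lt_of_le hlt (min_le_left _ _)
    · intro j hj
      have hfj : f j (t • w + X) = t * ε j := by
        have hm := (f j).map_vadd X (t • w)
        simp only [vadd_eq_add] at hm
        rw [hm, LinearMap.map_smul, hw j hj, hSzero j hj, smul_eq_mul, add_zero]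
      rcases hε j hj with h1 | h1 <;> rw [hfj, h1] <;> nlinarith [ht0]
    · rw [dist_comm, hdist]; exact lt_of_lt_of_le hlt (min_le_right _ _)
  have hQne : Q.Nonempty := by
    obtain ⟨y, hy, -⟩ := Metric.mem_closure_iff.mp hXQ 1 one_pos
    exact ⟨y, hy⟩
  obtain ⟨y₀, hy₀⟩ := hQne
  have hQcomp : ∀ y ∈ Q, Q ⊆ connectedComponentIn (HypCompl f) y := fun y hy =>
    hQconv.isPreconnected.subset_connectedComponentIn hy hQsub
  have hdom : IsDomain f (connectedComponentIn (HypCompl f) y₀) := ⟨y₀, hQsub hy₀, rfl⟩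
  have hcl : X ∈ closure (connectedComponentIn (HypCompl f) y₀) :=
    closure_mono (hQcomp y₀ hy₀) hXQ
  have hsign : ∀ j ∈ Sx, ∀ y ∈ connectedComponentIn (HypCompl f) y₀, 0 < ε j * f j y := by
    intro j hj y hy
    have hc : ε j ≠ 0 := by rcases hε j hj with h1 | h1 <;> rw [h1] <;> norm_num
    exact sign_const (continuous_const.mul (f j).continuous_of_finiteDimensional)
      isPreconnected_connectedComponentIn
      (fun z hz => mul_ne_zero hc
        ((connectedComponentIn_subset _ _ hz : _ ∈ HypCompl f) j))
      (mem_connectedComponentIn (hQsub hy₀)) hy (hy₀.2 j hj)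
  refine ⟨connectedComponentIn (HypCompl f) y₀, ⟨hdom, hcl, hsign⟩, ?_⟩
  rintro Δ ⟨⟨x₁, hx₁, rfl⟩, hclΔ, hsignΔ⟩
  obtain ⟨y, hy, hyd⟩ := Metric.mem_closure_iff.mp hclΔ r hr0
  have hyQ : y ∈ Q := ⟨by rw [dist_comm]; exact hyd, fun j hj => hsignΔ j hj y hy⟩
  have h1 : connectedComponentIn (HypCompl f) x₁ = connectedComponentIn (HypCompl f) y :=
    connectedComponentIn_eq hy
  have h2 : y₀ ∈ connectedComponentIn (HypCompl f) y := hQcomp y hyQ hy₀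
  have h3 : connectedComponentIn (HypCompl f) y = connectedComponentIn (HypCompl f) y₀ :=
    connectedComponentIn_eq h2
  rw [h1, h3]

/-- for every vertex `X` there are exactly `2^k` arrangement domains
whose closure contains `X`, and the sign vector map `Δ ↦ (sign of f j on Δ)_{j ∈ X}`
is a bijection from this set of domains onto `{-1, +1}^X`. -/
theorem stmt_11 {k N : ℕ} (hk : 1 ≤ k) (hkN : k ≤ N)
    (f : Fin N → ((Fin k → ℝ) →ᵃ[ℝ] ℝ)) (hf : Generic f)
    (Sx : Finset (Fin N)) (X : Fin k → ℝ) (hX : IsVertexOf f Sx X) :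
    {Δ : Set (Fin k → ℝ) | IsDomain f Δ ∧ X ∈ closure Δ}.ncard = 2 ^ k ∧
    (∀ Δ : Set (Fin k → ℝ), IsDomain f Δ ∧ X ∈ closure Δ →
      ∃ ε : Fin N → ℝ, (∀ j ∈ Sx, ε j = 1 ∨ ε j = -1) ∧
        ∀ j ∈ Sx, ∀ y ∈ Δ, 0 < ε j * f j y) ∧
    (∀ ε : Fin N → ℝ, (∀ j ∈ Sx, ε j = 1 ∨ ε j = -1) →
      ∃! Δ : Set (Fin k → ℝ), IsDomain f Δ ∧ X ∈ closure Δ ∧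
        ∀ j ∈ Sx, ∀ y ∈ Δ, 0 < ε j * f j y) := by
  have hScard := hX.1
  refine ⟨?_, ?_, fun ε hε => key f hf hX ε hε⟩
  · -- counting
    have hkey : ∀ b : {j // j ∈ Sx} → Bool,
        ∃! Δ : Set (Fin k → ℝ), IsDomain f Δ ∧ X ∈ closure Δ ∧
          ∀ j ∈ Sx, ∀ y ∈ Δ,
            0 < (if h : j ∈ Sx then (if b ⟨j, h⟩ then (1:ℝ) else -1) else 1) * f j y := by
      intro b
      refine key f hf hX _ ?_
      intro j hj
      rw [dif_pos hj]
      by_cases h : b ⟨j, hj⟩ <;> simp [h]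
    choose g hg hgu using hkey
    have hrange : {Δ : Set (Fin k → ℝ) | IsDomain f Δ ∧ X ∈ closure Δ} = Set.range g := by
      ext Δ
      constructor
      · rintro ⟨hdomΔ, hcl⟩
        obtain ⟨x₁, hx₁, hΔeq⟩ := hdomΔ
        have hx₁mem : x₁ ∈ Δ := hΔeq ▸ mem_connectedComponentIn hx₁
        refine ⟨fun j => decide (0 < f j.1 x₁),
          (hgu _ Δ ⟨⟨x₁, hx₁, hΔeq⟩, hcl, ?_⟩).symm⟩
        intro j hj y hy
        rw [dif_pos hj]
        by_cases h : 0 < f j x₁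
        · rw [if_pos (by simpa using h)]
          exact domain_sign f ⟨x₁, hx₁, hΔeq⟩ j 1 hx₁mem hy (by simpa using h)
        · rw [if_neg (by simpa using h)]
          have hlt : f j x₁ < 0 := lt_of_le_of_ne (not_lt.mp h) (hx₁ j)
          exact domain_sign f ⟨x₁, hx₁, hΔeq⟩ j (-1) hx₁mem hy (by nlinarith)
      · rintro ⟨b, rfl⟩
        exact ⟨(hg b).1, (hg b).2.1⟩
    have hginj : Function.Injective g := by
      intro b b' hbb
      by_contra hne
      obtain ⟨j, hj⟩ : ∃ j, b j ≠ b' j := Function.ne_iff.mp hne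
      obtain ⟨x₁, hx₁, hΔeq⟩ := (hg b).1
      have hx₁mem : x₁ ∈ g b := hΔeq ▸ mem_connectedComponentIn hx₁
      have h1 := (hg b).2.2 j.1 j.2 x₁ hx₁mem
      have h2 := (hg b').2.2 j.1 j.2 x₁ (hbb ▸ hx₁mem)
      rw [dif_pos j.2] at h1 h2
      have hjj : (⟨j.1, j.2⟩ : {j // j ∈ Sx}) = j := Subtype.eta _ _
      rw [hjj] at h1 h2
      cases hbj : b j <;> cases hbj' : b' j <;> rw [hbj] at h1 <;> rw [hbj'] at h2
      · exact hj (hbj.trans hbj'.symm)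
      · simp at h1 h2; nlinarith [h1, h2]
      · simp at h1 h2; nlinarith [h1, h2]
      · exact hj (hbj.trans hbj'.symm)
    rw [hrange, ← Set.image_univ, Set.ncard_image_of_injective _ hginj, Set.ncard_univ]
    simp [Nat.card_eq_fintype_card, Fintype.card_fun, Fintype.card_coe, hScard]
  · -- each adherent domain has a sign vector
    rintro Δ ⟨hdomΔ, hcl⟩
    obtain ⟨x₁, hx₁, hΔeq⟩ := hdomΔ
    have hx₁mem : x₁ ∈ Δ := hΔeq ▸ mem_connectedComponentIn hx₁
    refine ⟨fun j => if 0 < f j x₁ then 1 else -1, fun j hj => ?_, fun j hj y hy => ?_⟩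
    · by_cases h : 0 < f j x₁ <;> simp [h]
    · by_cases h : 0 < f j x₁
      · simp only [if_pos h]
        exact domain_sign f ⟨x₁, hx₁, hΔeq⟩ j 1 hx₁mem hy (by simpa using h)
      · simp only [if_neg h]
        have hlt : f j x₁ < 0 := lt_of_le_of_ne (not_lt.mp h) (hx₁ j)
        exact domain_sign f ⟨x₁, hx₁, hΔeq⟩ j (-1) hx₁mem hy (by nlinarith)


end HypArr
end
end

section
/- Let X be a vertex (with index set also denoted X), let ρ ∈ ℂ with |ρ| = 1 and ρ ∉ ℝ, and let C^ρ_X = {X + ρ·Σ_{j∈X} a_j e_{X∖{j}} : a_j ∈ ℝ, a_j ≥ 0 for all j ∈ X} ⊆ ℂ^k, where the real points X and e_{X∖{j}} are regarded as points of ℂ^k. Then for every index l ∉ X, the set C^ρ_X is disjoint from the complexified hyperplane ℂH_l = {z ∈ ℂ^k : F_l(z) = 0}, where F_l is the ℂ-affine extension of f_l to ℂ^k. -/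
open Set MeasureTheory Filter
open scoped Classical Real

noncomputable section

namespace HypArr

variable {k N : ℕ}

/-!
Writing `z = X + ρ v` with `v = ∑ a_j e_j` real, the complexification gives
`F_l z = f_l X + ρ · f_l.linear v` with both `f_l X` and `f_l.linear v` real. Since `ρ ∉ ℝ`,
this vanishes only if `f_l X = 0`, i.e. only if `k + 1` hyperplanes pass through the vertex `X`.
-/

section ComplexExtension

variable {ι : Type*} {f : (ι → ℝ) →ᵃ[ℝ] ℝ} {F : (ι → ℂ) →ᵃ[ℂ] ℂ}

theorem linear_apply_ofReal (hF : ∀ x : ι → ℝ, F (fun i => (x i : ℂ)) = f x) (v : ι → ℝ) :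
    F.linear (fun i => (v i : ℂ)) = f.linear v := by
  have h0 : (fun i => ((0 : ι → ℝ) i : ℂ)) = 0 := by ext; simp
  rw [← sub_zero (fun i => (v i : ℂ)), ← h0, ← vsub_eq_sub, F.linearMap_vsub, hF, hF,
    vsub_eq_sub, ← Complex.ofReal_sub, ← vsub_eq_sub, ← f.linearMap_vsub, vsub_eq_sub, sub_zero]

theorem apply_ofReal_add_smul_ofReal (hF : ∀ x : ι → ℝ, F (fun i => (x i : ℂ)) = f x)
    (x v : ι → ℝ) (ρ : ℂ) :
    F ((fun i => (x i : ℂ)) + ρ • fun i => (v i : ℂ)) = f x + ρ * f.linear v := by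
  rw [add_comm, ← vadd_eq_add, AffineMap.map_vadd, map_smul, linear_apply_ofReal hF, hF,
    vadd_eq_add, smul_eq_mul, add_comm]

theorem sum_smul_ofReal {α ι : Type*} (s : Finset α) (a : α → ℝ) (e : α → ι → ℝ) :
    ∑ j ∈ s, (a j : ℂ) • (fun i => (e j i : ℂ)) = fun i => ((∑ j ∈ s, a j • e j) i : ℂ) := by
  ext i
  simp [Finset.sum_apply]

end ComplexExtension

theorem _root_.Complex.eq_zero_of_ofReal_add_mul_ofReal_eq_zero {ρ : ℂ} (hρ : ρ.im ≠ 0)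
    {p q : ℝ} (h : (p : ℂ) + ρ * q = 0) : p = 0 := by
  have him := congrArg Complex.im h
  have hre := congrArg Complex.re h
  simp only [Complex.add_im, Complex.ofReal_im, Complex.mul_im, Complex.ofReal_re, mul_zero,
    zero_add, Complex.zero_im, mul_eq_zero, hρ, false_or] at him
  simpa [him] using hre

theorem Generic.apply_ne_zero_of_notMem {k N : ℕ} {f : Fin N → ((Fin k → ℝ) →ᵃ[ℝ] ℝ)}
    (hf : Generic f) {S : Finset (Fin N)} {X : Fin k → ℝ} (hX : IsVertexOf f S X) {l : Fin N}
    (hl : l ∉ S) : f l X ≠ 0 := fun hlX =>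
  hf.2.2 (insert l S) (by rw [Finset.card_insert_of_notMem hl, hX.1])
    ⟨X, Finset.forall_mem_insert _ _ _ |>.mpr ⟨hlX, hX.2⟩⟩

theorem stmt_12_general {k N : ℕ}
    (f : Fin N → ((Fin k → ℝ) →ᵃ[ℝ] ℝ)) (hf : Generic f)
    (Sx : Finset (Fin N)) (X : Fin k → ℝ) (hX : IsVertexOf f Sx X)
    (e : Fin N → (Fin k → ℝ))
    (ρ : ℂ) (hρ2 : ρ.im ≠ 0)
    (F : Fin N → ((Fin k → ℂ) →ᵃ[ℂ] ℂ))
    (hF : ∀ (j : Fin N) (x : Fin k → ℝ), F j (fun i => (x i : ℂ)) = (f j x : ℂ)) :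
    ∀ l : Fin N, l ∉ Sx →
      ∀ z : Fin k → ℂ,
        (∃ a : Fin N → ℝ, (∀ j ∈ Sx, 0 ≤ a j) ∧
          z = (fun i => (X i : ℂ)) +
            ρ • ∑ j ∈ Sx, (a j : ℂ) • (fun i => (e j i : ℂ))) →
        F l z ≠ 0 := by
  rintro l hl z ⟨a, -, rfl⟩ hzero
  rw [sum_smul_ofReal, apply_ofReal_add_smul_ofReal (hF l)] at hzero
  exact hf.apply_ne_zero_of_notMem hX hl
    (Complex.eq_zero_of_ofReal_add_mul_ofReal_eq_zero hρ2 hzero)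

/-- for a vertex `X`, `ρ ∈ ℂ` with `|ρ| = 1`, `ρ ∉ ℝ`, the complex cone
`C^ρ_X = {X + ρ • ∑_{j ∈ X} a j • e_{X∖{j}} : a j ≥ 0} ⊆ ℂ^k` is disjoint from every
complexified hyperplane `ℂH l` with `l ∉ X`. -/
theorem stmt_12 {k N : ℕ} (hk : 1 ≤ k) (hkN : k ≤ N)
    (f : Fin N → ((Fin k → ℝ) →ᵃ[ℝ] ℝ)) (hf : Generic f)
    (f0 : (Fin k → ℝ) →ₗ[ℝ] ℝ) (hf0 : GenericLin f f0)
    (Sx : Finset (Fin N)) (X : Fin k → ℝ) (hX : IsVertexOf f Sx X)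
    (e : Fin N → (Fin k → ℝ))
    (he : ∀ j ∈ Sx, (∀ i ∈ Sx.erase j, (f i).linear (e j) = 0) ∧ f0 (e j) = 1)
    (ρ : ℂ) (hρ1 : ‖ρ‖ = 1) (hρ2 : ρ.im ≠ 0)
    (F : Fin N → ((Fin k → ℂ) →ᵃ[ℂ] ℂ))
    (hF : ∀ (j : Fin N) (x : Fin k → ℝ), F j (fun i => (x i : ℂ)) = (f j x : ℂ)) :
    ∀ l : Fin N, l ∉ Sx →
      ∀ z : Fin k → ℂ,
        (∃ a : Fin N → ℝ, (∀ j ∈ Sx, 0 ≤ a j) ∧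
          z = (fun i => (X i : ℂ)) +
            ρ • ∑ j ∈ Sx, (a j : ℂ) • (fun i => (e j i : ℂ))) →
        F l z ≠ 0 :=
  stmt_12_general f hf Sx X hX e ρ hρ2 F hF

end HypArr
end
end

section
/- Let X and X' be distinct vertices and let j be an index with j ∈ X ∩ X' (so the hyperplane H_j contains both points X and X', and the open cones C⁺_X, C⁺_{X'}, C⁻_X, C⁻_{X'} are all disjoint from H_j). Then H_j separates C⁺_X from C⁺_{X'} if and only if H_j separates C⁻_X from C⁻_{X'}. -/
open Set MeasureTheory Filter
open scoped Classical Real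

noncomputable section

namespace HypArr

variable {k N : ℕ}

section Aux

/-- Convexity of a "same sign" set defined by an affine form. -/
lemma convex_sign (g : (Fin k → ℝ) →ᵃ[ℝ] ℝ) (c : ℝ) : Convex ℝ {x | 0 < g x * c} := by
  intro x hx y hy a b ha hb hab
  simp only [Set.mem_setOf_eq] at hx hy ⊢
  rw [Convex.combo_affine_apply hab]
  simp only [smul_eq_mul]
  rcases eq_or_lt_of_le ha with rfl | hlt
  · nlinarith [hy]
  · nlinarith [mul_pos hlt hx, mul_nonneg hb hy.le]

/-- On a preconnected set where an affine form does not vanish, it has constant sign. -/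
lemma sign_mul_pos (g : (Fin k → ℝ) →ᵃ[ℝ] ℝ) {s : Set (Fin k → ℝ)} (hs : IsPreconnected s)
    (h0 : ∀ x ∈ s, g x ≠ 0) {a b : Fin k → ℝ} (ha : a ∈ s) (hb : b ∈ s) : 0 < g a * g b := by
  by_contra h
  have h' : g a * g b < 0 :=
    lt_of_le_of_ne (not_lt.mp h) (mul_ne_zero (h0 a ha) (h0 b hb))
  have hcont : ContinuousOn g s := g.continuous_of_finiteDimensional.continuousOn
  rcases mul_neg_iff.mp h' with ⟨hpa, hnb⟩ | ⟨hna, hpb⟩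
  · obtain ⟨x, hx, hgx⟩ := hs.intermediate_value hb ha hcont ⟨hnb.le, hpa.le⟩
    exact h0 x hx hgx
  · obtain ⟨x, hx, hgx⟩ := hs.intermediate_value ha hb hcont ⟨hna.le, hpb.le⟩
    exact h0 x hx hgx

/-- Membership in the connected component of the complement of a hyperplane. -/
lemma mem_comp_iff (g : (Fin k → ℝ) →ᵃ[ℝ] ℝ) {a b : Fin k → ℝ} (ha : g a ≠ 0) (hb : g b ≠ 0) :
    b ∈ connectedComponentIn {x | g x = 0}ᶜ a ↔ 0 < g a * g b := by
  constructor
  · intro h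
    exact sign_mul_pos g isPreconnected_connectedComponentIn
      (fun x hx => connectedComponentIn_subset _ _ hx)
      (mem_connectedComponentIn ha) h
  · intro h
    have hQ : Convex ℝ {x | 0 < g x * g a} := convex_sign g (g a)
    have haQ : a ∈ {x | 0 < g x * g a} := mul_self_pos.mpr ha
    have hsub : {x | 0 < g x * g a} ⊆ {x | g x = 0}ᶜ := by
      intro x hx hx0
      simp only [Set.mem_setOf_eq] at hx hx0
      rw [hx0] at hx; simp at hx
    exact hQ.isPreconnected.subset_connectedComponentIn haQ hsub
      (by rw [mul_comm] at h; exact h)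

/-- Separation criterion for a hyperplane and two preconnected sets avoiding it. -/
lemma sep_iff (g : (Fin k → ℝ) →ᵃ[ℝ] ℝ) {A B : Set (Fin k → ℝ)} (hA : IsPreconnected A)
    (hB : IsPreconnected B) {a b : Fin k → ℝ} (haA : a ∈ A) (hbB : b ∈ B)
    (hA0 : ∀ x ∈ A, g x ≠ 0) (hB0 : ∀ x ∈ B, g x ≠ 0) :
    Separates {x | g x = 0} A B ↔ g a * g b < 0 := by
  constructor
  · rintro ⟨x, hx, y, hy, hAx, hBy, hne⟩
    by_contra h
    have hpos : 0 < g a * g b :=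
      lt_of_le_of_ne (not_lt.mp h) (Ne.symm (mul_ne_zero (hA0 a haA) (hB0 b hbB)))
    have hb' : b ∈ connectedComponentIn {x | g x = 0}ᶜ a := (mem_comp_iff g (hA0 a haA) (hB0 b hbB)).mpr hpos
    have e1 : connectedComponentIn {x | g x = 0}ᶜ a = connectedComponentIn {x | g x = 0}ᶜ x :=
      (connectedComponentIn_eq (hAx haA)).symm
    have e2 : connectedComponentIn {x | g x = 0}ᶜ b = connectedComponentIn {x | g x = 0}ᶜ y :=
      (connectedComponentIn_eq (hBy hbB)).symm
    have e3 : connectedComponentIn {x | g x = 0}ᶜ b = connectedComponentIn {x | g x = 0}ᶜ a :=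
      (connectedComponentIn_eq hb').symm
    exact hne (e1 ▸ e2 ▸ e3 ▸ rfl)
  · intro h
    refine ⟨a, haA, b, hbB, hA.subset_connectedComponentIn haA (fun x hx => hA0 x hx),
      hB.subset_connectedComponentIn hbB (fun x hx => hB0 x hx), ?_⟩
    intro heq
    have hb' : b ∈ connectedComponentIn {x | g x = 0}ᶜ a := by
      rw [heq]; exact mem_connectedComponentIn (hB0 b hbB)
    have := (mem_comp_iff g (hA0 a haA) (hB0 b hbB)).mp hb'
    linarith

/-- Basic properties of a cone component. -/
lemma coneComp_props (f : Fin N → ((Fin k → ℝ) →ᵃ[ℝ] ℝ)) {S : Finset (Fin N)}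
    {C : Set (Fin k → ℝ)} (hC : IsConeComp f S C) :
    (∃ y, y ∈ C) ∧ IsPreconnected C ∧ ∀ x ∈ C, ∀ i ∈ S, f i x ≠ 0 := by
  obtain ⟨y0, h0, rfl⟩ := hC
  exact ⟨⟨y0, mem_connectedComponentIn h0⟩, isPreconnected_connectedComponentIn,
    fun x hx => connectedComponentIn_subset _ _ hx⟩

/-- Existence of coefficients expressing `f0` in terms of the forms of a vertex, with
all coefficients nonzero, plus surjectivity of the joint evaluation map. -/
lemma exists_coeffs (f : Fin N → ((Fin k → ℝ) →ᵃ[ℝ] ℝ)) (hf : Generic f)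
    (f0 : (Fin k → ℝ) →ₗ[ℝ] ℝ) (hf0 : GenericLin f f0)
    {Sx : Finset (Fin N)} {X : Fin k → ℝ} (hX : IsVertexOf f Sx X) :
    ∃ c : Fin N → ℝ, (∀ z, f0 z = f0 X + ∑ i ∈ Sx, c i * f i z) ∧
      (∀ j ∈ Sx, c j ≠ 0) ∧ (∀ t : Fin N → ℝ, ∃ z, ∀ i ∈ Sx, f i z = t i) := by
  obtain ⟨hcard, hX0⟩ := hX
  set M : (Fin k → ℝ) →ₗ[ℝ] (Sx → ℝ) := LinearMap.pi (fun i : Sx => (f i).linear) with hM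
  have hMapp : ∀ (w : Fin k → ℝ) (i : Sx), M w i = (f i).linear w := fun w i => rfl
  have hlin : ∀ (i : Fin N), i ∈ Sx → ∀ z, f i z = (f i).linear (z - X) := by
    intro i hi z
    have := (f i).linearMap_vsub z X
    simp only [vsub_eq_sub] at this
    rw [this, hX0 i hi, sub_zero]
  have hinj : Function.Injective M := by
    rw [← LinearMap.ker_eq_bot, LinearMap.ker_eq_bot']
    intro z hz
    obtain ⟨x0, hx0, huniq⟩ := hf.2.1 Sx hcard
    have h1 : ∀ i ∈ Sx, f i (z + X) = 0 := by
      intro i hi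
      have hz' : (f i).linear z = 0 := congrFun hz ⟨i, hi⟩
      rw [hlin i hi (z + X)]
      simpa using hz'
    have e1 : z + X = x0 := huniq _ h1
    have e2 : X = x0 := huniq _ hX0
    have : z + X = X := by rw [e1, e2]
    simpa using this
  have hdim : Module.finrank ℝ (Fin k → ℝ) = Module.finrank ℝ (Sx → ℝ) := by
    simp [Module.finrank_pi, hcard]
  let e : (Fin k → ℝ) ≃ₗ[ℝ] (Sx → ℝ) := M.linearEquivOfInjective hinj hdim
  have heapp : ∀ (w : Fin k → ℝ) (i : Sx), e w i = (f i).linear w := by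
    intro w i
    have : e w = M w := M.linearEquivOfInjective_apply hinj hdim w
    rw [this]
    exact hMapp w i
  set cc : Sx → ℝ := fun i => f0 (e.symm (fun j : Sx => if i = j then 1 else 0)) with hcc
  set c : Fin N → ℝ := fun i => if h : i ∈ Sx then cc ⟨i, h⟩ else 0 with hcdef
  have hcoe : ∀ i : Sx, c ↑i = cc i := by
    intro i
    simp only [hcdef, dif_pos i.2]
  have key : ∀ z, f0 z = f0 X + ∑ i ∈ Sx, c i * f i z := by
    intro z
    set w := z - X with hw
    have h1 : f0 z - f0 X = f0 w := by rw [hw, map_sub]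
    have h2 : f0 w = (f0 ∘ₗ (e.symm : (Sx → ℝ) →ₗ[ℝ] (Fin k → ℝ))) (e w) := by
      simp [LinearEquiv.symm_apply_apply]
    have h3 := LinearMap.pi_apply_eq_sum_univ
      (f0 ∘ₗ (e.symm : (Sx → ℝ) →ₗ[ℝ] (Fin k → ℝ))) (e w)
    have h4 : f0 w = ∑ i : Sx, (f (↑i : Fin N)) z * cc i := by
      rw [h2, h3]
      apply Finset.sum_congr rfl
      intro i _
      rw [heapp w i]
      have : (f (↑i : Fin N)).linear w = f ↑i z := (hlin ↑i i.2 z).symm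
      rw [this]
      simp [hcc, smul_eq_mul]
    have h5 : (∑ i : Sx, (f (↑i : Fin N)) z * cc i) = ∑ i ∈ Sx, c i * f i z := by
      rw [← Finset.sum_coe_sort Sx (fun i => c i * f i z)]
      apply Finset.sum_congr rfl
      intro i _
      rw [hcoe i, mul_comm]
    linarith [h1, h4.trans h5]
  have hsurj : ∀ t : Fin N → ℝ, ∃ z, ∀ i ∈ Sx, f i z = t i := by
    intro t
    refine ⟨e.symm (fun i : Sx => t ↑i) + X, ?_⟩
    intro i hi
    rw [hlin i hi]
    have : (e.symm (fun i : Sx => t ↑i) + X) - X = e.symm (fun i : Sx => t ↑i) := by ring_nf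
    rw [this]
    have h6 := heapp (e.symm (fun i : Sx => t ↑i)) ⟨i, hi⟩
    rw [← h6, LinearEquiv.apply_symm_apply]
  refine ⟨c, key, ?_, hsurj⟩
  intro j hj
  obtain ⟨x, y, hx, hy, hxy⟩ := hf0.2 (Sx.erase j) (by rw [Finset.card_erase_of_mem hj, hcard])
  intro hcj
  apply hxy
  have hx' : f0 x = f0 X + ∑ i ∈ Sx, c i * f i x := key x
  have hy' : f0 y = f0 X + ∑ i ∈ Sx, c i * f i y := key y
  have hzx : ∀ i ∈ Sx, c i * f i x = 0 := by
    intro i hi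
    by_cases hij : i = j
    · rw [hij, hcj]; ring
    · rw [hx i (Finset.mem_erase.mpr ⟨hij, hi⟩)]; ring
  have hzy : ∀ i ∈ Sx, c i * f i y = 0 := by
    intro i hi
    by_cases hij : i = j
    · rw [hij, hcj]; ring
    · rw [hy i (Finset.mem_erase.mpr ⟨hij, hi⟩)]; ring
  rw [hx', hy', Finset.sum_congr rfl hzx, Finset.sum_congr rfl hzy]

/-- On a cone component on which `f0 - f0 X` is positive, the sign of `f j` agrees
with the sign of the coefficient `c j`. -/
lemma aux_sign (f : Fin N → ((Fin k → ℝ) →ᵃ[ℝ] ℝ)) {Sx : Finset (Fin N)}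
    {C : Set (Fin k → ℝ)} (hC : IsConeComp f Sx C) {y : Fin k → ℝ} (hy : y ∈ C)
    (f0 : (Fin k → ℝ) →ₗ[ℝ] ℝ) {X : Fin k → ℝ}
    (hpos : ∀ z ∈ C, f0 X < f0 z) (c : Fin N → ℝ)
    (hc : ∀ z, f0 z = f0 X + ∑ i ∈ Sx, c i * f i z)
    (hsurj : ∀ t : Fin N → ℝ, ∃ z, ∀ i ∈ Sx, f i z = t i)
    {j : Fin N} (hj : j ∈ Sx) (hcj : c j ≠ 0) : 0 < c j * f j y := by
  obtain ⟨y0, h0, hCdef⟩ := hC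
  have hyU : ∀ i ∈ Sx, f i y ≠ 0 := by
    have hy' : y ∈ connectedComponentIn {z | ∀ j ∈ Sx, f j z ≠ 0} y0 := by
      rw [← hCdef]; exact hy
    exact connectedComponentIn_subset {z | ∀ j ∈ Sx, f j z ≠ 0} y0 hy'
  -- the "sign set" of y is contained in C
  have hPconv : Convex ℝ {w | ∀ i ∈ Sx, 0 < f i w * f i y} := by
    intro w1 h1 w2 h2 a b ha hb hab
    intro i hi
    have hp := h1 i hi
    have hq := h2 i hi
    show 0 < f i (a • w1 + b • w2) * f i y
    rw [Convex.combo_affine_apply hab]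
    simp only [smul_eq_mul]
    rcases eq_or_lt_of_le ha with rfl | hlt
    · nlinarith [hq]
    · nlinarith [mul_pos hlt hp, mul_nonneg hb hq.le]
  have hPsub : {w | ∀ i ∈ Sx, 0 < f i w * f i y} ⊆ {z | ∀ j ∈ Sx, f j z ≠ 0} := by
    intro w hw i hi hzero
    have := hw i hi
    rw [hzero] at this; simp at this
  have hyP : y ∈ {w | ∀ i ∈ Sx, 0 < f i w * f i y} := by
    intro i hi
    exact mul_self_pos.mpr (hyU i hi)
  have hPC : {w | ∀ i ∈ Sx, 0 < f i w * f i y} ⊆ C := by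
    have hy' : y ∈ connectedComponentIn {z | ∀ j ∈ Sx, f j z ≠ 0} y0 := by
      rw [← hCdef]; exact hy
    have hyC : connectedComponentIn {z | ∀ j ∈ Sx, f j z ≠ 0} y0 =
        connectedComponentIn {z | ∀ j ∈ Sx, f j z ≠ 0} y := connectedComponentIn_eq hy'
    rw [hCdef, hyC]
    exact hPconv.isPreconnected.subset_connectedComponentIn hyP hPsub
  -- now the contradiction argument
  by_contra h
  have hq : c j * f j y < 0 :=
    lt_of_le_of_ne (not_lt.mp h) (mul_ne_zero hcj (hyU j hj))
  set B : ℝ := ∑ i ∈ Sx.erase j, c i * f i y with hB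
  set s : ℝ := (-(c j * f j y)) / (2 * (|B| + 1)) with hs
  have hspos : 0 < s := by
    apply div_pos (by linarith) (by positivity)
  obtain ⟨z, hz⟩ := hsurj (fun i => if i = j then f j y else s * f i y)
  have hzP : z ∈ {w | ∀ i ∈ Sx, 0 < f i w * f i y} := by
    intro i hi
    show 0 < f i z * f i y
    rw [hz i hi]
    by_cases hij : i = j
    · subst hij
      simp only [if_pos rfl]
      exact mul_self_pos.mpr (hyU i hi)
    · rw [if_neg hij]
      have := mul_self_pos.mpr (hyU i hi)
      nlinarith [hspos]
  have hsum : ∑ i ∈ Sx, c i * f i z = c j * f j y + s * B := by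
    rw [← Finset.add_sum_erase _ _ hj, hz j hj, if_pos rfl]
    congr 1
    rw [hB, Finset.mul_sum]
    apply Finset.sum_congr rfl
    intro i hi
    rw [hz i (Finset.mem_of_mem_erase hi), if_neg (Finset.ne_of_mem_erase hi)]
    ring
  have hlt := hpos z (hPC hzP)
  rw [hc z, hsum] at hlt
  have habs : B ≤ |B| := le_abs_self B
  have habs0 : (0:ℝ) ≤ |B| := abs_nonneg B
  have hs2 : s * (2 * (|B| + 1)) = -(c j * f j y) := by
    rw [hs]; field_simp
  nlinarith [mul_le_mul_of_nonneg_left habs hspos.le]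

end Aux

/-- for distinct vertices `X`, `X'` and an index `j` in both index sets,
the hyperplane `H j` separates `C⁺_X` from `C⁺_{X'}` iff it separates `C⁻_X` from
`C⁻_{X'}`. -/
theorem stmt_13 {k N : ℕ} (hk : 1 ≤ k) (hkN : k ≤ N)
    (f : Fin N → ((Fin k → ℝ) →ᵃ[ℝ] ℝ)) (hf : Generic f)
    (f0 : (Fin k → ℝ) →ₗ[ℝ] ℝ) (hf0 : GenericLin f f0)
    (Sx Sx' : Finset (Fin N)) (X X' : Fin k → ℝ)
    (hX : IsVertexOf f Sx X) (hX' : IsVertexOf f Sx' X') (hne : X ≠ X')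
    (j : Fin N) (hj : j ∈ Sx ∩ Sx')
    (Cp Cp' Cm Cm' : Set (Fin k → ℝ))
    (hCp : IsPosCone f f0 Sx X Cp) (hCp' : IsPosCone f f0 Sx' X' Cp')
    (hCm : IsNegCone f f0 Sx X Cm) (hCm' : IsNegCone f f0 Sx' X' Cm') :
    Separates (Hyp f j) Cp Cp' ↔ Separates (Hyp f j) Cm Cm' := by
  obtain ⟨hj1, hj2⟩ := Finset.mem_inter.mp hj
  obtain ⟨c, hc, hc0, hsurj⟩ := exists_coeffs f hf f0 hf0 hX
  obtain ⟨c', hc', hc0', hsurj'⟩ := exists_coeffs f hf f0 hf0 hX'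
  obtain ⟨⟨yp, hyp⟩, hprep, hnvp⟩ := coneComp_props f hCp.1
  obtain ⟨⟨yp', hyp'⟩, hprep', hnvp'⟩ := coneComp_props f hCp'.1
  obtain ⟨⟨ym, hym⟩, hprem, hnvm⟩ := coneComp_props f hCm.1
  obtain ⟨⟨ym', hym'⟩, hprem', hnvm'⟩ := coneComp_props f hCm'.1
  have hcnegid : ∀ z, (-f0) z = (-f0) X + ∑ i ∈ Sx, (-c) i * f i z := by
    intro z
    have h := hc z
    simp only [LinearMap.neg_apply, Pi.neg_apply, neg_mul, Finset.sum_neg_distrib]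
    linarith
  have hcnegid' : ∀ z, (-f0) z = (-f0) X' + ∑ i ∈ Sx', (-c') i * f i z := by
    intro z
    have h := hc' z
    simp only [LinearMap.neg_apply, Pi.neg_apply, neg_mul, Finset.sum_neg_distrib]
    linarith
  have hp : 0 < c j * f j yp := aux_sign f hCp.1 hyp f0 hCp.2 c hc hsurj hj1 (hc0 j hj1)
  have hp' : 0 < c' j * f j yp' := aux_sign f hCp'.1 hyp' f0 hCp'.2 c' hc' hsurj' hj2 (hc0' j hj2)
  have hm : 0 < (-c) j * f j ym := by
    refine aux_sign f hCm.1 hym (-f0) (fun z hz => ?_) (-c) hcnegid hsurj hj1 ?_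
    · simp only [LinearMap.neg_apply]
      exact neg_lt_neg (hCm.2 z hz)
    · simp only [Pi.neg_apply, ne_eq, neg_eq_zero]
      exact hc0 j hj1
  have hm' : 0 < (-c') j * f j ym' := by
    refine aux_sign f hCm'.1 hym' (-f0) (fun z hz => ?_) (-c') hcnegid' hsurj' hj2 ?_
    · simp only [LinearMap.neg_apply]
      exact neg_lt_neg (hCm'.2 z hz)
    · simp only [Pi.neg_apply, ne_eq, neg_eq_zero]
      exact hc0' j hj2
  simp only [Pi.neg_apply, neg_mul, neg_pos] at hm hm'
  have hsepp : Separates (Hyp f j) Cp Cp' ↔ f j yp * f j yp' < 0 :=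
    sep_iff (f j) hprep hprep' hyp hyp' (fun x hx => hnvp x hx j hj1)
      (fun x hx => hnvp' x hx j hj2)
  have hsepm : Separates (Hyp f j) Cm Cm' ↔ f j ym * f j ym' < 0 :=
    sep_iff (f j) hprem hprem' hym hym' (fun x hx => hnvm x hx j hj1)
      (fun x hx => hnvm' x hx j hj2)
  rw [hsepp, hsepm]
  constructor <;> intro h <;> nlinarith [mul_pos hp hp', mul_pos_of_neg_of_neg hm hm', h]

end HypArr
end
end

section
/- Let Δ ∈ 𝒟⁺ be an arrangement domain, let X be a vertex lying in the closure of Δ, and let Δ' ∈ 𝒟⁺ be an arrangement domain with Δ' ⊆ C⁺_X. Then the sets ℋ(Δ,Δ_X) and ℋ(Δ_X,Δ') are disjoint, and their union equals ℋ(Δ,Δ'). -/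
open Set MeasureTheory Filter
open scoped Classical Real

noncomputable section

namespace HypArr

variable {k N : ℕ}

-- Auxiliary lemmas
lemma fcont (f : Fin N → ((Fin k → ℝ) →ᵃ[ℝ] ℝ)) (j : Fin N) : Continuous (f j) :=
  AffineMap.continuous_linear_iff.mp (f j).linear.continuous_of_finiteDimensional

lemma sign_const_s14 (f : Fin N → ((Fin k → ℝ) →ᵃ[ℝ] ℝ)) (j : Fin N) {S : Set (Fin k → ℝ)}
    (hS : IsPreconnected S) (h0 : ∀ x ∈ S, f j x ≠ 0) :
    (∀ x ∈ S, 0 < f j x) ∨ (∀ x ∈ S, f j x < 0) := by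
  by_contra h
  push_neg at h
  obtain ⟨⟨x, hx, hx'⟩, ⟨y, hy, hy'⟩⟩ := h
  obtain ⟨q, hq, hq0⟩ := hS.intermediate_value₂ hx hy ((fcont f j).continuousOn)
    continuousOn_const hx' hy'
  exact h0 q hq hq0

lemma compl_hyp (f : Fin N → ((Fin k → ℝ) →ᵃ[ℝ] ℝ)) (j : Fin N) :
    (Hyp f j)ᶜ = {x | f j x ≠ 0} := rfl

lemma sep_iff_s14 (f : Fin N → ((Fin k → ℝ) →ᵃ[ℝ] ℝ)) (j : Fin N) {S T : Set (Fin k → ℝ)}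
    (hSne : S.Nonempty) (hScon : IsPreconnected S) (hS0 : ∀ x ∈ S, f j x ≠ 0)
    (hTne : T.Nonempty) (hTcon : IsPreconnected T) (hT0 : ∀ x ∈ T, f j x ≠ 0) :
    Separates (Hyp f j) S T ↔ ¬ ((∀ x ∈ S, 0 < f j x) ↔ (∀ x ∈ T, 0 < f j x)) := by
  have hWc : (Hyp f j)ᶜ = {x | f j x ≠ 0} := rfl
  have hsubc : ∀ x : Fin k → ℝ, f j x ≠ 0 →
      IsPreconnected (connectedComponentIn (Hyp f j)ᶜ x) ∧
      connectedComponentIn (Hyp f j)ᶜ x ⊆ {p | f j p ≠ 0} := fun x hx =>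
    ⟨isPreconnected_connectedComponentIn, hWc ▸ connectedComponentIn_subset _ _⟩
  -- same-sign points are in the same component
  have hGpos : Convex ℝ {p : Fin k → ℝ | 0 < f j p} := (convex_Ioi (0:ℝ)).affine_preimage (f j)
  have hGneg : Convex ℝ {p : Fin k → ℝ | f j p < 0} := (convex_Iio (0:ℝ)).affine_preimage (f j)
  have hsame : ∀ x y : Fin k → ℝ, 0 < f j x * f j y →
      connectedComponentIn (Hyp f j)ᶜ x = connectedComponentIn (Hyp f j)ᶜ y := by
    intro x y hxy
    rcases mul_pos_iff.mp hxy with ⟨hx, hy⟩ | ⟨hx, hy⟩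
    · exact connectedComponentIn_eq
        (hGpos.isPreconnected.subset_connectedComponentIn hx (fun p hp => hWc ▸ ne_of_gt hp) hy)
    · exact connectedComponentIn_eq
        (hGneg.isPreconnected.subset_connectedComponentIn hx (fun p hp => hWc ▸ ne_of_lt hp) hy)
  have hdiff : ∀ x y : Fin k → ℝ, f j x * f j y < 0 →
      connectedComponentIn (Hyp f j)ᶜ x ≠ connectedComponentIn (Hyp f j)ᶜ y := by
    intro x y hxy heq
    have hx0 : f j x ≠ 0 := fun h => by simp [h] at hxy
    have hy0 : f j y ≠ 0 := fun h => by simp [h] at hxy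
    have hxmem : x ∈ connectedComponentIn (Hyp f j)ᶜ x := mem_connectedComponentIn (hWc ▸ hx0)
    have hymem : y ∈ connectedComponentIn (Hyp f j)ᶜ x :=
      heq ▸ mem_connectedComponentIn (hWc ▸ hy0)
    rcases mul_neg_iff.mp hxy with ⟨hx, hy⟩ | ⟨hx, hy⟩
    · obtain ⟨q, hq, hq0⟩ := (hsubc x hx0).1.intermediate_value₂ hymem hxmem
        ((fcont f j).continuousOn) continuousOn_const hy.le hx.le
      exact (hsubc x hx0).2 hq hq0
    · obtain ⟨q, hq, hq0⟩ := (hsubc x hx0).1.intermediate_value₂ hxmem hymem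
        ((fcont f j).continuousOn) continuousOn_const hx.le hy.le
      exact (hsubc x hx0).2 hq hq0
  constructor
  · rintro ⟨x, hxS, y, hyT, hSsub, hTsub, hne⟩ hiff
    rcases sign_const_s14 f j hScon hS0 with hSp | hSn
    · have hTp := hiff.mp hSp
      exact hne (hsame x y (mul_pos (hSp x hxS) (hTp y hyT)))
    · have hTn : ∀ p ∈ T, f j p < 0 := by
        rcases sign_const_s14 f j hTcon hT0 with hTp | hTn
        · obtain ⟨x₀, hx₀⟩ := hSne
          exact absurd (hiff.mpr hTp x₀ hx₀) (not_lt.mpr (hSn x₀ hx₀).le)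
        · exact hTn
      exact hne (hsame x y (mul_pos_of_neg_of_neg (hSn x hxS) (hTn y hyT)))
  · intro hiff
    obtain ⟨x, hxS⟩ := hSne
    obtain ⟨y, hyT⟩ := hTne
    refine ⟨x, hxS, y, hyT,
      hScon.subset_connectedComponentIn hxS (fun p hp => hWc ▸ hS0 p hp),
      hTcon.subset_connectedComponentIn hyT (fun p hp => hWc ▸ hT0 p hp), ?_⟩
    rcases sign_const_s14 f j hScon hS0 with hSp | hSn <;>
      rcases sign_const_s14 f j hTcon hT0 with hTp | hTn
    · exact absurd (iff_of_true hSp hTp) hiff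
    · exact hdiff x y (mul_neg_of_pos_of_neg (hSp x hxS) (hTn y hyT))
    · exact hdiff x y (mul_neg_of_neg_of_pos (hSn x hxS) (hTp y hyT))
    · exact absurd (iff_of_false (fun h => absurd (h x hxS) (not_lt.mpr (hSn x hxS).le))
        (fun h => absurd (h y hyT) (not_lt.mpr (hTn y hyT).le))) hiff

lemma not_sep_of_same (f : Fin N → ((Fin k → ℝ) →ᵃ[ℝ] ℝ)) (j : Fin N) {S T : Set (Fin k → ℝ)}
    (hSne : S.Nonempty) (hScon : IsPreconnected S) (hS0 : ∀ x ∈ S, f j x ≠ 0)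
    (hTne : T.Nonempty) (hTcon : IsPreconnected T) (hT0 : ∀ x ∈ T, f j x ≠ 0)
    {z y : Fin k → ℝ} (hz : z ∈ S) (hy : y ∈ T) (hzy : 0 < f j z * f j y) :
    ¬ Separates (Hyp f j) S T := by
  rw [sep_iff_s14 f j hSne hScon hS0 hTne hTcon hT0, not_not]
  constructor
  · intro hP
    rcases sign_const_s14 f j hTcon hT0 with h | h
    · exact h
    · exact absurd hzy (not_lt.mpr (mul_nonpos_of_nonneg_of_nonpos (hP z hz).le (h y hy).le))
  · intro hQ
    rcases sign_const_s14 f j hScon hS0 with h | h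
    · exact h
    · exact absurd hzy (not_lt.mpr (mul_nonpos_of_nonpos_of_nonneg (h z hz).le (hQ y hy).le))

lemma domain_facts (f : Fin N → ((Fin k → ℝ) →ᵃ[ℝ] ℝ)) {Δ : Set (Fin k → ℝ)}
    (h : IsDomain f Δ) : Δ.Nonempty ∧ IsPreconnected Δ ∧ Δ ⊆ HypCompl f := by
  obtain ⟨x, hx, rfl⟩ := h
  exact ⟨⟨x, mem_connectedComponentIn hx⟩, isPreconnected_connectedComponentIn,
    connectedComponentIn_subset _ _⟩

lemma orth_convex (f : Fin N → ((Fin k → ℝ) →ᵃ[ℝ] ℝ)) (σ : Fin k → Fin N)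
    (z : Fin k → ℝ) : Convex ℝ {p : Fin k → ℝ | ∀ i : Fin k, 0 < f (σ i) z * f (σ i) p} := by
  intro p hp q hq a b ha hb hab
  intro i
  show 0 < f (σ i) z * f (σ i) (a • p + b • q)
  rw [Convex.combo_affine_apply hab]
  simp only [smul_eq_mul]
  have h1 := hp i
  have h2 := hq i
  by_cases ha0 : a = 0
  · have hb1 : b = 1 := by linarith
    simpa [ha0, hb1] using h2
  · have ha' : 0 < a := ha.lt_of_ne (Ne.symm ha0)
    nlinarith [mul_pos ha' h1, mul_nonneg hb h2.le]

lemma eval_add (f : Fin N → ((Fin k → ℝ) →ᵃ[ℝ] ℝ)) {σ : Fin k → Fin N} {X : Fin k → ℝ}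
    (hσX : ∀ i, f (σ i) X = 0) (i : Fin k) (v : Fin k → ℝ) :
    f (σ i) (v + X) = (f (σ i)).linear v := by
  have h := (f (σ i)).map_vadd X v
  simpa [hσX i] using h

lemma eval_sub (f : Fin N → ((Fin k → ℝ) →ᵃ[ℝ] ℝ)) {σ : Fin k → Fin N} {X : Fin k → ℝ}
    (hσX : ∀ i, f (σ i) X = 0) (i : Fin k) (p : Fin k → ℝ) :
    (f (σ i)).linear (p - X) = f (σ i) p := by
  have h := (f (σ i)).linearMap_vsub p X
  simpa [hσX i] using h

lemma decomp_exists (f : Fin N → ((Fin k → ℝ) →ᵃ[ℝ] ℝ)) (f0 : (Fin k → ℝ) →ₗ[ℝ] ℝ)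
    (σ : Fin k → Fin N) (X : Fin k → ℝ) (hσX : ∀ i, f (σ i) X = 0)
    (huniq : ∀ x : Fin k → ℝ, (∀ i, f (σ i) x = 0) → x = X) :
    ∃ c : Fin k → ℝ, (∀ p : Fin k → ℝ, f0 p - f0 X = ∑ i, c i * f (σ i) p) ∧
      (∀ u : Fin k → ℝ, ∃ p : Fin k → ℝ, ∀ m, f (σ m) p = u m) := by
  let T : (Fin k → ℝ) →ₗ[ℝ] (Fin k → ℝ) := LinearMap.pi fun i => (f (σ i)).linear
  have hTapp : ∀ v i, T v i = (f (σ i)).linear v := fun v i => rfl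
  have hTker : ∀ v, T v = 0 → v = 0 := by
    intro v hv
    have h1 : ∀ i, f (σ i) (v + X) = 0 := by
      intro i
      rw [eval_add f hσX i v, ← hTapp v i, hv]
      rfl
    have h2 : v + X = X := huniq _ h1
    simpa using h2
  have hTinj : Function.Injective T :=
    LinearMap.ker_eq_bot.mp (LinearMap.ker_eq_bot'.mpr hTker)
  have hTsurj : Function.Surjective T := LinearMap.injective_iff_surjective.mp hTinj
  let E : (Fin k → ℝ) ≃ₗ[ℝ] (Fin k → ℝ) := LinearEquiv.ofBijective T ⟨hTinj, hTsurj⟩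
  refine ⟨fun i => f0 (E.symm fun m => if i = m then 1 else 0), fun p => ?_, fun u => ?_⟩
  · have hE : E.symm (T (p - X)) = p - X := E.symm_apply_apply (p - X)
    have h3 := LinearMap.pi_apply_eq_sum_univ
      (f0.comp (E.symm : (Fin k → ℝ) ≃ₗ[ℝ] (Fin k → ℝ)).toLinearMap) (T (p - X))
    have h4 : (f0.comp (E.symm : (Fin k → ℝ) ≃ₗ[ℝ] (Fin k → ℝ)).toLinearMap) (T (p - X))
        = f0 (p - X) := by
      simp only [LinearMap.comp_apply, LinearEquiv.coe_toLinearMap]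
      rw [hE]
    calc f0 p - f0 X = f0 (p - X) := (map_sub f0 p X).symm
      _ = ∑ i, T (p - X) i •
            (f0.comp (E.symm : (Fin k → ℝ) ≃ₗ[ℝ] (Fin k → ℝ)).toLinearMap)
            (fun m => if i = m then 1 else 0) := by rw [← h4, h3]
      _ = ∑ i, f0 (E.symm fun m => if i = m then 1 else 0) * f (σ i) p := by
          refine Finset.sum_congr rfl fun i _ => ?_
          rw [hTapp, eval_sub f hσX i p]
          simp only [smul_eq_mul, LinearMap.comp_apply, LinearEquiv.coe_toLinearMap]
          ring
  · obtain ⟨v, hv⟩ := hTsurj u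
    exact ⟨v + X, fun m => by rw [eval_add f hσX m v, ← hTapp v m, hv]⟩


set_option maxHeartbeats 1600000 in
/-- for `Δ ∈ 𝒟⁺`, a vertex `X` in the closure of `Δ`, and `Δ' ∈ 𝒟⁺` with
`Δ' ⊆ C⁺_X`, the sets `ℋ(Δ, Δ_X)` and `ℋ(Δ_X, Δ')` are disjoint with union `ℋ(Δ, Δ')`. -/
theorem stmt_14 {k N : ℕ} (hk : 1 ≤ k) (hkN : k ≤ N)
    (f : Fin N → ((Fin k → ℝ) →ᵃ[ℝ] ℝ)) (hf : Generic f)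
    (f0 : (Fin k → ℝ) →ₗ[ℝ] ℝ) (hf0 : GenericLin f f0)
    (Δ : Set (Fin k → ℝ)) (hΔ : MemDplus f f0 Δ)
    (Sx : Finset (Fin N)) (X : Fin k → ℝ) (hX : IsVertexOf f Sx X)
    (hXΔ : X ∈ closure Δ)
    (Dx : Set (Fin k → ℝ)) (hDx : IsDomOf f f0 X Dx)
    (Cx : Set (Fin k → ℝ)) (hCx : IsPosCone f f0 Sx X Cx)
    (Δ' : Set (Fin k → ℝ)) (hΔ' : MemDplus f f0 Δ') (hsub : Δ' ⊆ Cx) :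
    Disjoint (SepSet f Δ Dx) (SepSet f Dx Δ') ∧
    SepSet f Δ Dx ∪ SepSet f Dx Δ' = SepSet f Δ Δ' := by

  -- basic facts about the three domains
  obtain ⟨hΔne, hΔcon, hΔsub⟩ := domain_facts f hΔ.1
  obtain ⟨hDxne, hDxcon, hDxsub⟩ := domain_facts f hDx.1
  obtain ⟨hΔ'ne, hΔ'con, hΔ'sub⟩ := domain_facts f hΔ'.1
  have hcard := hX.1
  have hXclD : X ∈ closure Dx := hDx.2.1
  have hDxpos : ∀ y ∈ Dx, f0 X < f0 y := hDx.2.2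
  -- an enumeration of Sx
  obtain ⟨σ, hσmem, hσinj, hσsurj⟩ : ∃ σ : Fin k → Fin N, (∀ i, σ i ∈ Sx) ∧
      Function.Injective σ ∧ ∀ j ∈ Sx, ∃ i, σ i = j := by
    refine ⟨fun i => ((Sx.orderIsoOfFin hcard i : {x // x ∈ Sx}) : Fin N),
      fun i => (Sx.orderIsoOfFin hcard i).2, ?_, ?_⟩
    · intro a b hab
      exact (Sx.orderIsoOfFin hcard).injective (Subtype.ext hab)
    · intro j hj
      exact ⟨(Sx.orderIsoOfFin hcard).symm ⟨j, hj⟩, by simp⟩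
  have hσX : ∀ i, f (σ i) X = 0 := fun i => hX.2 _ (hσmem i)
  -- uniqueness of the vertex
  have huniq : ∀ x : Fin k → ℝ, (∀ i, f (σ i) x = 0) → x = X := by
    intro x hx
    obtain ⟨x0, hx0, hx0uniq⟩ := hf.2.1 Sx hcard
    have h1 : ∀ j ∈ Sx, f j x = 0 := by
      intro j hj; obtain ⟨i, rfl⟩ := hσsurj j hj; exact hx i
    exact (hx0uniq x h1).trans (hx0uniq X hX.2).symm
  -- decomposition of f0 along the vertex forms, and solvability
  obtain ⟨c, hdecomp, hsolv⟩ := decomp_exists f f0 σ X hσX huniq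
  -- the coefficients are nonzero
  have hc0 : ∀ i, c i ≠ 0 := by
    intro i hci
    obtain ⟨x, y, hx, hy, hxy⟩ := hf0.2 (Sx.erase (σ i))
      (by rw [Finset.card_erase_of_mem (hσmem i), hcard])
    apply hxy
    have h3 : ∀ m : Fin k, c m * f (σ m) x = c m * f (σ m) y := by
      intro m
      by_cases hm : m = i
      · subst hm; rw [hci]; ring
      · have hmem : σ m ∈ Sx.erase (σ i) :=
          Finset.mem_erase.mpr ⟨fun h => hm (hσinj h), hσmem m⟩
        rw [hx _ hmem, hy _ hmem]
    have h4 : f0 x - f0 X = f0 y - f0 X := by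
      rw [hdecomp x, hdecomp y]
      exact Finset.sum_congr rfl fun m _ => h3 m
    linarith
  -- sign extraction from positivity on an orthant
  have horth : ∀ y : Fin k → ℝ, (∀ i, f (σ i) y ≠ 0) →
      (∀ p : Fin k → ℝ, (∀ i, 0 < f (σ i) y * f (σ i) p) → f0 X < f0 p) →
      ∀ i, 0 < c i * f (σ i) y := by
    intro y hy hpos i
    by_contra hcon
    push_neg at hcon
    have hB : c i * f (σ i) y < 0 := hcon.lt_of_ne (mul_ne_zero (hc0 i) (hy i))
    set A := ∑ m ∈ Finset.univ.erase i, c m * f (σ m) y with hA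
    set M := max 1 ((A + 1) / (-(c i * f (σ i) y))) with hM
    have hM0 : (0:ℝ) < M := lt_of_lt_of_le one_pos (le_max_left _ _)
    obtain ⟨p, hp⟩ := hsolv (fun m => if m = i then M * f (σ i) y else f (σ m) y)
    have hmem : ∀ m, 0 < f (σ m) y * f (σ m) p := by
      intro m
      rw [hp m]
      rcases eq_or_ne m i with hm | hm
      · rw [hm, if_pos rfl]
        have h5 := mul_self_pos.mpr (hy i)
        nlinarith
      · rw [if_neg hm]
        exact mul_self_pos.mpr (hy m)
    have hfp := hpos _ hmem
    have hsum : f0 p - f0 X = A + M * (c i * f (σ i) y) := by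
      rw [hdecomp p, ← Finset.sum_erase_add _ _ (Finset.mem_univ i)]
      congr 1
      · exact Finset.sum_congr rfl fun m hm => by
          rw [hp m, if_neg (Finset.ne_of_mem_erase hm)]
      · rw [hp i, if_pos rfl]; ring
    have hMB : A + 1 ≤ M * (-(c i * f (σ i) y)) := by
      have h1 : (A + 1) / (-(c i * f (σ i) y)) ≤ M := le_max_right _ _
      exact (div_le_iff₀ (by linarith)).mp h1
    nlinarith [hfp, hsum, hMB]
  -- vertex forms off Sx do not vanish at X
  have hvnz : ∀ j, j ∉ Sx → f j X ≠ 0 := by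
    intro j hj h0
    refine hf.2.2 (insert j Sx) ?_ ⟨X, ?_⟩
    · rw [Finset.card_insert_of_notMem hj, hcard]
    · intro i hi
      rcases Finset.mem_insert.mp hi with rfl | hi
      exacts [h0, hX.2 i hi]
  -- a point of Dx
  obtain ⟨z, hzDx⟩ := id hDxne
  have hzne : ∀ i, f (σ i) z ≠ 0 := fun i => hDxsub hzDx (σ i)
  -- positivity on the orthant of Dx, via a small ball around X
  have hDorthpos : ∀ p : Fin k → ℝ, (∀ i, 0 < f (σ i) z * f (σ i) p) → f0 X < f0 p := by
    have hVopen : IsOpen {q : Fin k → ℝ | ∀ j, j ∉ Sx → f j q ≠ 0} := by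
      have hEq : {q : Fin k → ℝ | ∀ j, j ∉ Sx → f j q ≠ 0}
          = ⋂ j : Fin N, {q | j ∉ Sx → f j q ≠ 0} := by
        ext q; simp [Set.mem_iInter]
      rw [hEq]
      apply isOpen_iInter_of_finite
      intro j
      by_cases hj : j ∈ Sx
      · convert isOpen_univ
        ext q; simp [hj]
      · have hEq2 : {q : Fin k → ℝ | j ∉ Sx → f j q ≠ 0} = (f j) ⁻¹' ({0}ᶜ) := by
          ext q; simp [hj]
        rw [hEq2]
        exact isOpen_compl_singleton.preimage (fcont f j)
    have hXV : X ∈ {q : Fin k → ℝ | ∀ j, j ∉ Sx → f j q ≠ 0} := fun j hj => hvnz j hj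
    obtain ⟨r, hr0, hball⟩ := Metric.isOpen_iff.mp hVopen X hXV
    obtain ⟨w, hwb, hwD⟩ :=
      _root_.mem_closure_iff.mp hXclD _ Metric.isOpen_ball (Metric.mem_ball_self hr0)
    have hDprod : ∀ (j : Fin N) (a b : Fin k → ℝ), a ∈ Dx → b ∈ Dx →
        0 < f j a * f j b := by
      intro j a b ha hb
      rcases sign_const_s14 f j hDxcon (fun x hx => hDxsub hx j) with h | h
      exacts [mul_pos (h a ha) (h b hb), mul_pos_of_neg_of_neg (h a ha) (h b hb)]
    have hOsub : {p : Fin k → ℝ | ∀ i, 0 < f (σ i) z * f (σ i) p} ∩ Metric.ball X r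
        ⊆ HypCompl f := by
      rintro q ⟨hq1, hq2⟩ j
      by_cases hj : j ∈ Sx
      · obtain ⟨i, rfl⟩ := hσsurj j hj
        intro h0
        have h1 := hq1 i
        rw [h0, mul_zero] at h1
        exact lt_irrefl 0 h1
      · exact hball hq2 j hj
    have hwO : w ∈ {p : Fin k → ℝ | ∀ i, 0 < f (σ i) z * f (σ i) p} ∩ Metric.ball X r :=
      ⟨fun i => hDprod (σ i) z w hzDx hwD, hwb⟩
    have hOD : {p : Fin k → ℝ | ∀ i, 0 < f (σ i) z * f (σ i) p} ∩ Metric.ball X r ⊆ Dx := by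
      obtain ⟨x0, hx0, hDeq⟩ := hDx.1
      have hw' : w ∈ connectedComponentIn (HypCompl f) x0 := hDeq ▸ hwD
      have h2 := ((orth_convex f σ z).inter (convex_ball X r)).isPreconnected.subset_connectedComponentIn hwO hOsub
      rw [hDeq, connectedComponentIn_eq hw']
      exact h2
    intro p hpO
    set v := p - X with hv
    set t := r / (2 * (‖v‖ + 1)) with ht
    have hvn : (0:ℝ) ≤ ‖v‖ := norm_nonneg v
    have ht0 : 0 < t := div_pos hr0 (by linarith)
    have hlin : ∀ i, (f (σ i)).linear v = f (σ i) p := fun i => eval_sub f hσX i p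
    have hptO : ∀ i, 0 < f (σ i) z * f (σ i) (t • v + X) := by
      intro i
      rw [eval_add f hσX i (t • v), LinearMap.map_smul, hlin i]
      simp only [smul_eq_mul]
      have h6 := hpO i
      nlinarith
    have hptb : t • v + X ∈ Metric.ball X r := by
      rw [Metric.mem_ball, dist_eq_norm, add_sub_cancel_right, norm_smul,
        Real.norm_eq_abs, abs_of_pos ht0, ht, div_mul_eq_mul_div, div_lt_iff₀ (by linarith)]
      nlinarith
    have hptD : t • v + X ∈ Dx := hOD ⟨hptO, hptb⟩
    have h5 := hDxpos _ hptD
    have h6 : f0 (t • v + X) = t * (f0 p - f0 X) + f0 X := by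
      rw [map_add, LinearMap.map_smul, smul_eq_mul, hv, map_sub]
    nlinarith [h5, h6, ht0]
  -- a point of Δ' and positivity on its orthant, via the cone Cx
  obtain ⟨y', hy'⟩ := id hΔ'ne
  have hy'Cx : y' ∈ Cx := hsub hy'
  obtain ⟨⟨y0, hy0, hCeq⟩, hCpos⟩ := hCx
  have hy'S : ∀ j ∈ Sx, f j y' ≠ 0 := by
    have h1 : y' ∈ {z : Fin k → ℝ | ∀ j ∈ Sx, f j z ≠ 0} := by
      rw [hCeq] at hy'Cx
      exact connectedComponentIn_subset _ _ hy'Cx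
    exact h1
  have hy'ne : ∀ i, f (σ i) y' ≠ 0 := fun i => hy'S _ (hσmem i)
  have hCorthpos : ∀ p : Fin k → ℝ, (∀ i, 0 < f (σ i) y' * f (σ i) p) → f0 X < f0 p := by
    intro p hpO
    apply hCpos
    have hO'sub : {q : Fin k → ℝ | ∀ i, 0 < f (σ i) y' * f (σ i) q}
        ⊆ {q : Fin k → ℝ | ∀ j ∈ Sx, f j q ≠ 0} := by
      rintro q hq j hj
      obtain ⟨i, rfl⟩ := hσsurj j hj
      intro h0
      have h1 := hq i
      rw [h0, mul_zero] at h1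
      exact lt_irrefl 0 h1
    have hy'O : y' ∈ {q : Fin k → ℝ | ∀ i, 0 < f (σ i) y' * f (σ i) q} :=
      fun i => mul_self_pos.mpr (hy'ne i)
    have hcompEq : Cx = connectedComponentIn {z : Fin k → ℝ | ∀ j ∈ Sx, f j z ≠ 0} y' := by
      rw [hCeq]
      exact connectedComponentIn_eq (hCeq ▸ hy'Cx)
    rw [hcompEq]
    exact (orth_convex f σ y').isPreconnected.subset_connectedComponentIn hy'O hO'sub hpO
  -- signs of Dx and Δ' agree on Sx
  have hsgnD := horth z hzne hDorthpos
  have hsgnC := horth y' hy'ne hCorthpos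
  have hsame : ∀ j ∈ Sx, 0 < f j z * f j y' := by
    intro j hj
    obtain ⟨i, rfl⟩ := hσsurj j hj
    nlinarith [mul_pos (hsgnD i) (hsgnC i), mul_self_pos.mpr (hc0 i)]
  -- points of a domain adjacent to X have the sign of f j X, for j off Sx
  have hclos : ∀ (D : Set (Fin k → ℝ)) (j : Fin N), X ∈ closure D → f j X ≠ 0 →
      ∃ w ∈ D, 0 < f j X * f j w := by
    intro D j hXD hj0
    have hU : IsOpen {q : Fin k → ℝ | 0 < f j X * f j q} :=
      isOpen_lt continuous_const (continuous_const.mul (fcont f j))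
    obtain ⟨w, hw1, hw2⟩ := _root_.mem_closure_iff.mp hXD _ hU (mul_self_pos.mpr hj0)
    exact ⟨w, hw2, hw1⟩
  -- the key dichotomy
  have hkey : ∀ j : Fin N, ¬ Separates (Hyp f j) Δ Dx ∨ ¬ Separates (Hyp f j) Dx Δ' := by
    intro j
    by_cases hj : j ∈ Sx
    · exact Or.inr (not_sep_of_same f j hDxne hDxcon (fun x hx => hDxsub hx j)
        hΔ'ne hΔ'con (fun x hx => hΔ'sub hx j) hzDx hy' (hsame j hj))
    · obtain ⟨w1, hw1, hs1⟩ := hclos Δ j hXΔ (hvnz j hj)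
      obtain ⟨w2, hw2, hs2⟩ := hclos Dx j hXclD (hvnz j hj)
      refine Or.inl (not_sep_of_same f j hΔne hΔcon (fun x hx => hΔsub hx j)
        hDxne hDxcon (fun x hx => hDxsub hx j) hw1 hw2 ?_)
      nlinarith [mul_pos hs1 hs2, mul_self_pos.mpr (hvnz j hj)]
  constructor
  · rw [Finset.disjoint_left]
    intro j h1 h2
    rw [SepSet, Finset.mem_filter] at h1 h2
    exact (hkey j).elim (fun h => h h1.2) (fun h => h h2.2)
  · ext j
    simp only [SepSet, Finset.mem_union, Finset.mem_filter, Finset.mem_univ, true_and]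
    have hΔ0 : ∀ x ∈ Δ, f j x ≠ 0 := fun x hx => hΔsub hx j
    have hD0 : ∀ x ∈ Dx, f j x ≠ 0 := fun x hx => hDxsub hx j
    have hΔ'0 : ∀ x ∈ Δ', f j x ≠ 0 := fun x hx => hΔ'sub hx j
    rw [sep_iff_s14 f j hΔne hΔcon hΔ0 hDxne hDxcon hD0,
      sep_iff_s14 f j hDxne hDxcon hD0 hΔ'ne hΔ'con hΔ'0,
      sep_iff_s14 f j hΔne hΔcon hΔ0 hΔ'ne hΔ'con hΔ'0]
    rcases hkey j with h | h
    · rw [sep_iff_s14 f j hΔne hΔcon hΔ0 hDxne hDxcon hD0] at h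
      revert h
      generalize (∀ x ∈ Δ, (0:ℝ) < f j x) = P
      generalize (∀ x ∈ Dx, (0:ℝ) < f j x) = Q
      generalize (∀ x ∈ Δ', (0:ℝ) < f j x) = R
      tauto
    · rw [sep_iff_s14 f j hDxne hDxcon hD0 hΔ'ne hΔ'con hΔ'0] at h
      revert h
      generalize (∀ x ∈ Δ, (0:ℝ) < f j x) = P
      generalize (∀ x ∈ Dx, (0:ℝ) < f j x) = Q
      generalize (∀ x ∈ Δ', (0:ℝ) < f j x) = R
      tauto


end HypArr
end
end

section
/- Let X' and X'' be vertices and set D(X',X'') = {Δ ∈ 𝒟⁺ : Δ ⊆ C⁺_{X'} and X'' lies in the closure of Δ}. Let H be an arrangement hyperplane with X'' ∈ H and X' ∉ H. Then for every Δ ∈ D(X',X'') there exists a unique Δ̃ ∈ D(X',X'') with Δ̃ ≠ Δ such that ℋ(Δ,Δ̃) = {H} (i.e. H is the only arrangement hyperplane separating Δ from Δ̃); consequently the map Δ ↦ Δ̃ is a fixed-point-free involution of D(X',X''), and D(X',X'') is partitioned into pairs of domains adjacent across H. -/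
open Set MeasureTheory Filter
open scoped Classical Real

noncomputable section

namespace HypArr

variable {k N : ℕ}

/-!
Arrangement domains are exactly the nonempty sign cells `{z | ∀ j, sign (f j z) = σ j}`, and
`H j` separates two domains iff their sign vectors differ at `j`. Hence the only candidate
partner of `Δ` is the cell whose sign vector is that of `Δ` with the `h`-th entry flipped. This
cell has `X''` in its closure: the forms vanishing at the vertex `X''` are those indexed by
`S''`, whose linear parts are independent, so along a suitable ray `X'' + t v` they take any
prescribed signs, while the other forms keep their signs at `X''`, which are those of `Δ`.
Since `h ∉ S'`, flipping the `h`-th sign keeps the cell inside `C⁺_{X'}`, where `f0 > f0 X'`.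
-/

open scoped Topology

section SignNearPoint

variable {α : Type*} [TopologicalSpace α]

theorem eventually_sign_eq {g : α → ℝ} {X : α} (hg : ContinuousAt g X) (hX : g X ≠ 0) :
    ∀ᶠ z in 𝓝 X, SignType.sign (g z) = SignType.sign (g X) := by
  simpa only [nhds_discrete, tendsto_pure, Function.comp_apply] using
    ((continuousAt_sign_of_ne_zero hX).comp hg).tendsto

theorem sign_eq_of_mem_closure {g : α → ℝ} {X : α} {A : Set α} {s : SignType}
    (hg : ContinuousAt g X) (hX : g X ≠ 0) (hXA : X ∈ closure A)
    (hA : ∀ z ∈ A, SignType.sign (g z) = s) : SignType.sign (g X) = s := by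
  obtain ⟨z, hzA, hz⟩ :=
    ((mem_closure_iff_frequently.mp hXA).and_eventually (eventually_sign_eq hg hX)).exists
  rw [← hz, hA z hzA]

end SignNearPoint

section SignCells

variable {E ι : Type*} [NormedAddCommGroup E] [NormedSpace ℝ E]

theorem convex_setOf_sign_eq (g : E →ᵃ[ℝ] ℝ) (s : SignType) :
    Convex ℝ {z | SignType.sign (g z) = s} := by
  have hs : Convex ℝ {t : ℝ | SignType.sign t = s} := by
    obtain rfl | rfl | rfl := s.trichotomy
    · rw [show {t : ℝ | SignType.sign t = -1} = Iio 0 from Set.ext fun _ => sign_eq_neg_one_iff]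
      exact convex_Iio 0
    · simpa only [sign_eq_zero_iff, ofPred_eq_eq_singleton] using
        convex_singleton (𝕜 := ℝ) (0 : ℝ)
    · rw [show {t : ℝ | SignType.sign t = 1} = Ioi 0 from Set.ext fun _ => sign_eq_one_iff]
      exact convex_Ioi 0
  exact hs.affine_preimage g

theorem connectedComponentIn_setOf_forall_ne_zero [FiniteDimensional ℝ E] (g : ι → E →ᵃ[ℝ] ℝ)
    (s : Set ι) {x : E} (hx : ∀ i ∈ s, g i x ≠ 0) :
    connectedComponentIn {z | ∀ i ∈ s, g i z ≠ 0} x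
      = {z | ∀ i ∈ s, SignType.sign (g i z) = SignType.sign (g i x)} := by
  apply Subset.antisymm
  · intro z hz i hi
    refine isPreconnected_connectedComponentIn.constant
      (f := fun w => SignType.sign (g i w)) (fun w hw => ?_) hz
      (mem_connectedComponentIn hx)
    have hw0 : g i w ≠ 0 := connectedComponentIn_subset _ _ hw i hi
    exact ((continuousAt_sign_of_ne_zero hw0).comp
      (g i).continuous_of_finiteDimensional.continuousAt).continuousWithinAt
  · have hconv : Convex ℝ {z | ∀ i ∈ s, SignType.sign (g i z) = SignType.sign (g i x)} := by
      simpa only [ofPred_forall] using convex_iInter₂ fun i (_ : i ∈ s) =>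
        convex_setOf_sign_eq (g i) (SignType.sign (g i x))
    refine hconv.isPreconnected.subset_connectedComponentIn (fun i _ => rfl) fun z hz i hi => ?_
    rw [← sign_ne_zero, hz i hi, sign_ne_zero]
    exact hx i hi

theorem eventually_sign_apply_smul_add [Finite ι] (g : ι → E →ᵃ[ℝ] ℝ) (X v : E) :
    ∀ᶠ t in 𝓝[>] (0 : ℝ), ∀ i, SignType.sign (g i (t • v + X))
      = if g i X = 0 then SignType.sign ((g i).linear v) else SignType.sign (g i X) := by
  refine eventually_all.mpr fun i => ?_
  have hline : ∀ t : ℝ, g i (t • v + X) = t * (g i).linear v + g i X := fun t => by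
    rw [← vadd_eq_add, AffineMap.map_vadd, LinearMap.map_smul, smul_eq_mul, vadd_eq_add]
  split_ifs with hX
  · filter_upwards [self_mem_nhdsWithin] with t (ht : 0 < t)
    rw [hline, hX, add_zero, sign_mul, sign_pos ht, one_mul]
  · have hcont : Continuous fun t : ℝ => g i (t • v + X) := by
      simp only [hline]; fun_prop
    have := eventually_sign_eq hcont.continuousAt (by rwa [zero_smul, zero_add])
    rw [zero_smul, zero_add] at this
    exact nhdsWithin_le_nhds this

theorem exists_linear_eq_of_existsUnique_zero [FiniteDimensional ℝ E] (g : ι → E →ᵃ[ℝ] ℝ)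
    {S : Finset ι} (hS : S.card = Module.finrank ℝ E) (hzero : ∃! X, ∀ j ∈ S, g j X = 0)
    (c : ι → ℝ) :
    ∃ v, ∀ j ∈ S, (g j).linear v = c j := by
  obtain ⟨X, hX, huniq⟩ := hzero
  let L : E →ₗ[ℝ] S → ℝ := LinearMap.pi fun j => (g j).linear
  have hinj : Function.Injective L := by
    refine (injective_iff_map_eq_zero L).mpr fun v hv => ?_
    have hvX : v +ᵥ X = X := (huniq _ fun j hj => by
      rw [AffineMap.map_vadd, hX j hj, vadd_eq_add, add_zero]
      exact congrFun hv ⟨j, hj⟩).trans (huniq X hX).symm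
    simpa using hvX
  have hrank : Module.finrank ℝ E = Module.finrank ℝ (S → ℝ) := by
    simp [hS]
  obtain ⟨v, hv⟩ := (LinearMap.injective_iff_surjective_of_finrank_eq_finrank hrank).mp hinj
    fun j => c j
  exact ⟨v, fun j hj => congrFun hv ⟨j, hj⟩⟩

end SignCells

theorem SignType.eq_update_neg_iff {ι : Type*} [DecidableEq ι] {σ τ : ι → SignType} {h : ι}
    (hσ : ∀ j, σ j ≠ 0) (hτ : ∀ j, τ j ≠ 0) :
    τ = Function.update σ h (-σ h) ↔ ∀ j, σ j ≠ τ j ↔ j = h := by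
  have ne_neg : ∀ a : SignType, a ≠ 0 → a ≠ -a := by decide
  have eq_neg : ∀ a b : SignType, a ≠ 0 → b ≠ 0 → a ≠ b → b = -a := by decide
  constructor
  · rintro rfl j
    rcases eq_or_ne j h with rfl | hj
    · simpa using ne_neg _ (hσ j)
    · simp [hj]
  · intro hsep
    funext j
    rcases eq_or_ne j h with rfl | hj
    · simpa using eq_neg _ _ (hσ j) (hτ j) ((hsep j).mpr rfl)
    · rw [Function.update_of_ne hj]
      exact (not_not.mp (mt (hsep j).mp hj)).symm

theorem SignType.update_neg_ne_zero {ι : Type*} [DecidableEq ι] {σ : ι → SignType} (h : ι)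
    (hσ : ∀ j, σ j ≠ 0) (j : ι) : Function.update σ h (-σ h) j ≠ 0 := by
  rcases eq_or_ne j h with rfl | hj
  · simpa using hσ j
  · simpa [hj] using hσ j

theorem not_separates_self {α : Type*} [TopologicalSpace α] (W S : Set α) :
    ¬ Separates W S S := by
  rintro ⟨x, -, y, hy, hSx, -, hne⟩
  exact hne (connectedComponentIn_eq (hSx hy))

variable {k N : ℕ} {f : Fin N → ((Fin k → ℝ) →ᵃ[ℝ] ℝ)}

def signVector (f : Fin N → ((Fin k → ℝ) →ᵃ[ℝ] ℝ)) (x : Fin k → ℝ) : Fin N → SignType :=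
  fun j => SignType.sign (f j x)

theorem mem_hypCompl_iff {x : Fin k → ℝ} : x ∈ HypCompl f ↔ ∀ j, signVector f x j ≠ 0 := by
  simp only [HypCompl, signVector, mem_ofPred_eq, sign_ne_zero]

theorem connectedComponentIn_hypCompl {x : Fin k → ℝ} (hx : x ∈ HypCompl f) :
    connectedComponentIn (HypCompl f) x = {z | signVector f z = signVector f x} := by
  have := connectedComponentIn_setOf_forall_ne_zero f univ fun j _ => hx j
  simp only [mem_univ, true_implies] at this
  simpa only [HypCompl, signVector, funext_iff] using this

theorem connectedComponentIn_compl_hyp {j : Fin N} {a : Fin k → ℝ} (ha : f j a ≠ 0) :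
    connectedComponentIn (Hyp f j)ᶜ a = {z | SignType.sign (f j z) = SignType.sign (f j a)} := by
  have := connectedComponentIn_setOf_forall_ne_zero f {j} fun i hi => by rwa [hi]
  simp only [mem_singleton_iff, forall_eq] at this
  simpa only [Hyp, compl_ofPred] using this

theorem separates_iff {x x' : Fin k → ℝ} (hx : x ∈ HypCompl f) (hx' : x' ∈ HypCompl f)
    (j : Fin N) :
    Separates (Hyp f j) {z | signVector f z = signVector f x}
        {z | signVector f z = signVector f x'} ↔ signVector f x j ≠ signVector f x' j := by
  constructor
  · rintro ⟨a, ha : _ = _, b, hb : _ = _, -, -, hne⟩ hxx'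
    have ha0 : f j a ≠ 0 := mem_hypCompl_iff.mpr (ha ▸ mem_hypCompl_iff.mp hx) j
    have hb0 : f j b ≠ 0 := mem_hypCompl_iff.mpr (hb ▸ mem_hypCompl_iff.mp hx') j
    rw [connectedComponentIn_compl_hyp ha0, connectedComponentIn_compl_hyp hb0] at hne
    exact hne (by rw [show SignType.sign (f j a) = SignType.sign (f j b) from
      (congrFun ha j).trans (hxx'.trans (congrFun hb j).symm)])
  · intro hne
    refine ⟨x, rfl, x', rfl, fun z hz => ?_, fun z hz => ?_, ?_⟩
    · rw [connectedComponentIn_compl_hyp (hx j)]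
      exact congrFun hz j
    · rw [connectedComponentIn_compl_hyp (hx' j)]
      exact congrFun hz j
    · rw [connectedComponentIn_compl_hyp (hx j), connectedComponentIn_compl_hyp (hx' j)]
      intro heq
      exact hne ((Set.ext_iff.mp heq x).mp rfl)

theorem mem_sepSet {Δ Δ' : Set (Fin k → ℝ)} {j : Fin N} :
    j ∈ SepSet f Δ Δ' ↔ Separates (Hyp f j) Δ Δ' := by
  simp only [SepSet, Finset.mem_filter, Finset.mem_univ, true_and]

theorem sepSet_eq_singleton_iff {x x' : Fin k → ℝ} (hx : x ∈ HypCompl f) (hx' : x' ∈ HypCompl f)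
    (h : Fin N) :
    SepSet f {z | signVector f z = signVector f x} {z | signVector f z = signVector f x'} = {h}
      ↔ signVector f x' = Function.update (signVector f x) h (-signVector f x h) := by
  rw [SignType.eq_update_neg_iff (mem_hypCompl_iff.mp hx) (mem_hypCompl_iff.mp hx'),
    Finset.ext_iff]
  simp only [mem_sepSet, Finset.mem_singleton, separates_iff hx hx']

theorem IsConeComp.setOf_signVector_eq_subset {S : Finset (Fin N)} {C : Set (Fin k → ℝ)}
    (hC : IsConeComp f S C) {x : Fin k → ℝ} (hx : x ∈ C) {τ : Fin N → SignType}
    (hτ : ∀ j ∈ S, τ j = signVector f x j) : {z | signVector f z = τ} ⊆ C := by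
  obtain ⟨y, hy, rfl⟩ := hC
  have hcell := connectedComponentIn_setOf_forall_ne_zero f (S : Set (Fin N)) hy
  simp only [Finset.mem_coe] at hcell
  rw [hcell] at hx ⊢
  intro z (hz : _ = _) j hj
  exact (congrFun hz j).trans ((hτ j hj).trans (hx j hj))

theorem IsVertexOf.mem_of_apply_eq_zero (hf : Generic f) {S : Finset (Fin N)} {X : Fin k → ℝ}
    (hX : IsVertexOf f S X) {j : Fin N} (hj : f j X = 0) : j ∈ S := by
  by_contra hjS
  refine hf.2.2 (insert j S) (by rw [Finset.card_insert_of_notMem hjS, hX.1]) ⟨X, ?_⟩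
  simpa only [Finset.forall_mem_insert] using ⟨hj, hX.2⟩

theorem IsVertexOf.mem_closure_setOf_signVector_eq (hf : Generic f) {S : Finset (Fin N)}
    {X : Fin k → ℝ} (hX : IsVertexOf f S X) {τ : Fin N → SignType}
    (hτ : ∀ j, f j X ≠ 0 → SignType.sign (f j X) = τ j) :
    X ∈ closure {z | signVector f z = τ} := by
  have sign_coe : ∀ s : SignType, SignType.sign (s : ℝ) = s := fun s => by
    obtain rfl | rfl | rfl := s.trichotomy <;> simp
  obtain ⟨v, hv⟩ := exists_linear_eq_of_existsUnique_zero f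
    (by rw [Module.finrank_fin_fun, hX.1]) (hf.2.1 S hX.1) fun j => (τ j : ℝ)
  have hline : Tendsto (fun t : ℝ => t • v + X) (𝓝[>] 0) (𝓝 X) := by
    have hcont : Continuous fun t : ℝ => t • v + X := by fun_prop
    simpa only [zero_smul, zero_add] using (hcont.tendsto 0).mono_left nhdsWithin_le_nhds
  refine mem_closure_of_tendsto hline ?_
  filter_upwards [eventually_sign_apply_smul_add f X v] with t ht
  funext j
  rw [signVector, ht j]
  split_ifs with hj
  · rw [hv j (hX.mem_of_apply_eq_zero hf hj), sign_coe]
  · exact hτ j hj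

theorem stmt_15_general {k N : ℕ}
    (f : Fin N → ((Fin k → ℝ) →ᵃ[ℝ] ℝ)) (hf : Generic f)
    (f0 : (Fin k → ℝ) →ₗ[ℝ] ℝ)
    (S' S'' : Finset (Fin N)) (X' X'' : Fin k → ℝ)
    (hX' : IsVertexOf f S' X') (hX'' : IsVertexOf f S'' X'')
    (C' : Set (Fin k → ℝ)) (hC' : IsPosCone f f0 S' X' C')
    (h : Fin N) (hh1 : f h X'' = 0) (hh2 : f h X' ≠ 0) :
    ∀ Δ : Set (Fin k → ℝ), (MemDplus f f0 Δ ∧ Δ ⊆ C' ∧ X'' ∈ closure Δ) →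
      ∃! Δ' : Set (Fin k → ℝ),
        (MemDplus f f0 Δ' ∧ Δ' ⊆ C' ∧ X'' ∈ closure Δ') ∧ Δ' ≠ Δ ∧
          SepSet f Δ Δ' = {h} := by
  rintro _ ⟨⟨⟨x, hx, rfl⟩, -⟩, hΔC', hX''Δ⟩
  rw [connectedComponentIn_hypCompl hx] at hΔC' hX''Δ ⊢
  set τ := Function.update (signVector f x) h (-signVector f x h) with hτ
  have hX''Δ' : X'' ∈ closure {z | signVector f z = τ} :=
    hX''.mem_closure_setOf_signVector_eq hf fun j hj => by
      rw [hτ, Function.update_of_ne (by rintro rfl; exact hj hh1)]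
      exact sign_eq_of_mem_closure (f j).continuous_of_finiteDimensional.continuousAt hj hX''Δ
        fun z hz => congrFun hz j
  obtain ⟨x', hx' : signVector f x' = τ⟩ := closure_nonempty_iff.mp ⟨_, hX''Δ'⟩
  have hx'H : x' ∈ HypCompl f :=
    mem_hypCompl_iff.mpr (hx' ▸ SignType.update_neg_ne_zero h (mem_hypCompl_iff.mp hx))
  have hsep : SepSet f {z | signVector f z = signVector f x} {z | signVector f z = τ} = {h} := by
    rw [← hx', sepSet_eq_singleton_iff hx hx'H, hx']
  have hΔ'C' : {z | signVector f z = τ} ⊆ C' :=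
    hC'.1.setOf_signVector_eq_subset (hΔC' rfl) fun j hj =>
      Function.update_of_ne (by rintro rfl; exact hh2 (hX'.2 j hj)) _ _
  refine ⟨{z | signVector f z = τ}, ⟨⟨⟨⟨x', hx'H, ?_⟩, ?_⟩, hΔ'C', hX''Δ'⟩, ?_, hsep⟩, ?_⟩
  · rw [connectedComponentIn_hypCompl hx'H, hx']
  · exact ⟨f0 X', forall_mem_image.mpr fun z hz => (hC'.2 z (hΔ'C' hz)).le⟩
  · intro heq
    rw [heq] at hsep
    exact not_separates_self _ _ (mem_sepSet.mp (hsep ▸ Finset.mem_singleton_self h))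
  · rintro _ ⟨⟨⟨⟨x₂, hx₂, rfl⟩, -⟩, -, -⟩, -, hsep₂⟩
    rw [connectedComponentIn_hypCompl hx₂] at hsep₂ ⊢
    rw [(sepSet_eq_singleton_iff hx hx₂ h).mp hsep₂]

/-- let `D(X',X'')` be the set of domains `Δ ∈ 𝒟⁺` with `Δ ⊆ C⁺_{X'}`
and `X''` in the closure of `Δ`, and let `H h` be an arrangement hyperplane containing
`X''` but not `X'`. Then every `Δ ∈ D(X',X'')` has a unique partner `Δ' ∈ D(X',X'')`,
`Δ' ≠ Δ`, with `ℋ(Δ,Δ') = {H h}`; so `D(X',X'')` is partitioned into pairs of domains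
adjacent across `H h`. -/
theorem stmt_15 {k N : ℕ} (hk : 1 ≤ k) (hkN : k ≤ N)
    (f : Fin N → ((Fin k → ℝ) →ᵃ[ℝ] ℝ)) (hf : Generic f)
    (f0 : (Fin k → ℝ) →ₗ[ℝ] ℝ) (hf0 : GenericLin f f0)
    (S' S'' : Finset (Fin N)) (X' X'' : Fin k → ℝ)
    (hX' : IsVertexOf f S' X') (hX'' : IsVertexOf f S'' X'')
    (C' : Set (Fin k → ℝ)) (hC' : IsPosCone f f0 S' X' C')
    (h : Fin N) (hh1 : f h X'' = 0) (hh2 : f h X' ≠ 0) :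
    ∀ Δ : Set (Fin k → ℝ), (MemDplus f f0 Δ ∧ Δ ⊆ C' ∧ X'' ∈ closure Δ) →
      ∃! Δ' : Set (Fin k → ℝ),
        (MemDplus f f0 Δ' ∧ Δ' ⊆ C' ∧ X'' ∈ closure Δ') ∧ Δ' ≠ Δ ∧
          SepSet f Δ Δ' = {h} :=
  stmt_15_general f hf f0 S' S'' X' X'' hX' hX'' C' hC' h hh1 hh2

end HypArr
end
end

section
/- Let X' and X'' be vertices. If there exists an arrangement domain Δ ∈ 𝒟⁺ with Δ ⊆ C⁺_{X'} such that X'' lies in the closure of Δ, then f_0(X') ≤ f_0(X''), with equality if and only if X' = X''. -/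
open Set MeasureTheory Filter
open scoped Classical Real

noncomputable section

namespace HypArr

variable {k N : ℕ}

/-- if some arrangement domain `Δ ∈ 𝒟⁺` with `Δ ⊆ C⁺_{X'}` has `X''` in
its closure, then `f0 X' ≤ f0 X''`, with equality iff `X' = X''`. -/
theorem stmt_16 {k N : ℕ} (hk : 1 ≤ k) (hkN : k ≤ N)
    (f : Fin N → ((Fin k → ℝ) →ᵃ[ℝ] ℝ)) (hf : Generic f)
    (f0 : (Fin k → ℝ) →ₗ[ℝ] ℝ) (hf0 : GenericLin f f0)
    (S' S'' : Finset (Fin N)) (X' X'' : Fin k → ℝ)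
    (hX' : IsVertexOf f S' X') (hX'' : IsVertexOf f S'' X'')
    (C' : Set (Fin k → ℝ)) (hC' : IsPosCone f f0 S' X' C')
    (hex : ∃ Δ : Set (Fin k → ℝ), MemDplus f f0 Δ ∧ Δ ⊆ C' ∧ X'' ∈ closure Δ) :
    f0 X' ≤ f0 X'' ∧ (f0 X' = f0 X'' ↔ X' = X'') := by
  obtain ⟨Δ, _, hΔC, hcl⟩ := hex
  have hcont : Continuous f0 := f0.continuous_of_finiteDimensional
  have hle : f0 X' ≤ f0 X'' := by
    have hclC : X'' ∈ closure C' := closure_mono hΔC hcl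
    have : ∀ y ∈ closure C', f0 X' ≤ f0 y := by
      intro y hy
      have hsub : closure C' ⊆ {y | f0 X' ≤ f0 y} := by
        apply closure_minimal
        · intro z hz; exact (hC'.2 z hz).le
        · exact isClosed_le continuous_const hcont
      exact hsub hy
    exact this _ hclC
  refine ⟨hle, ?_, fun h => by rw [h]⟩
  intro heq
  by_contra hne
  exact hf0.1 X' X'' ⟨S', hX'⟩ ⟨S'', hX''⟩ hne heq

end HypArr
end
end
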